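/- arXiv:0903.0160 — 14 statements merged into one kernel-verified Lean document; each statement's English description precedes it below -/
import Mathlib

section
/- Let K be a linearly ordered compact space, i.e., a linear order that is compact in its order topology, and suppose there exists a quasi metric d on K that fragments K (that is, K is a fragmentable compact). Then K is almost totally disconnected: there exist a set Γ and a topological embedding f : K → [0,1]^Γ such that for every x ∈ K the set {γ ∈ Γ : f(x)(γ) ∉ {0,1}} is countable. -/
universe u

open Set Topology

/-- A quasi metric: symmetric, nonnegative, vanishing exactly on the diagonal
(the triangle inequality may fail). -/
def IsQuasiMetric {K : Type u} (d : K → K → ℝ) : Prop :=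
  (∀ x y, 0 ≤ d x y) ∧ (∀ x y, d x y = d y x) ∧ (∀ x y, d x y = 0 ↔ x = y)

/-- `d` fragments `K`: every nonempty closed set has a relatively open nonempty
subset of `d`-diameter less than any prescribed `ε > 0`. -/
def Fragments {K : Type u} [TopologicalSpace K] (d : K → K → ℝ) : Prop :=
  ∀ L : Set K, L.Nonempty → IsClosed L → ∀ ε : ℝ, 0 < ε →
    ∃ U : Set K, IsOpen U ∧ (U ∩ L).Nonempty ∧
      ∀ x ∈ U ∩ L, ∀ y ∈ U ∩ L, d x y < ε

/-- `K` is almost totally disconnected: it embeds into `[0,1]^Γ` so that every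
point has all but countably many coordinates in `{0,1}`. -/
def AlmostTotallyDisconnected (K : Type u) [TopologicalSpace K] : Prop :=
  ∃ (Γ : Type u) (f : K → Γ → ℝ),
    Topology.IsEmbedding f ∧
    (∀ x γ, f x γ ∈ Set.Icc (0:ℝ) 1) ∧
    (∀ x : K, {γ : Γ | f x γ ∉ ({0, 1} : Set ℝ)}.Countable)

/-!
For each `m`, Zorn's lemma gives a maximal disjoint family `𝒞 m` of open order-convex sets of
`d`-diameter `< 1 / (m + 1)`, and inside each `V` a maximal family `F V` of pairs `u < v` of
points of `V` with disjoint intervals `(u, v]`. The coordinates of the embedding are Urysohn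
functions, `0` on `(-∞, u]` and `1` on `[v, ∞)`, for the pairs in the families `F V` with
`V ∈ 𝒞 m` and for the gaps `u < v` with `(u, v) = ∅`. A point lies in `(u, v)` for at most one
such pair per level `m`, so all but countably many of its coordinates are `0` or `1`.

To separate `x < y` when `[x, y]` contains no gap, pick `a < b` in `(x, y)` and `m` with
`1 / (m + 1) < d a b`. Then `(x, y)` lies in no member of `𝒞 m`, but it meets one, `V`, by
maximality and fragmentability, so `V` ends inside `(x, y)`; from a point of `V ∩ (x, y)` not
inside any `(u, v)` with `(u, v) ∈ F V`, maximality of `F V` yields a pair of `F V` inside `[x, y]`.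
-/

section DisjointFamily

variable {ι α : Type*}

def IsDisjointFamily (P : ι → Prop) (g : ι → Set α) (F : Set ι) : Prop :=
  (∀ i ∈ F, P i) ∧ F.PairwiseDisjoint g

theorem exists_maximal_isDisjointFamily (P : ι → Prop) (g : ι → Set α) :
    ∃ F, Maximal (IsDisjointFamily P g) F := by
  refine zorn_subset {F | IsDisjointFamily P g F} fun c hc hchain =>
    ⟨⋃₀ c, ⟨?_, ?_⟩, fun F hF => subset_sUnion_of_mem hF⟩
  · rintro i ⟨F, hFc, hi⟩
    exact (hc hFc).1 i hi
  · exact (hchain.pairwiseDisjoint_sUnion g).2 fun F hF => (hc hF).2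

theorem Maximal.exists_inter_nonempty_of_isDisjointFamily {P : ι → Prop} {g : ι → Set α}
    {F : Set ι} (hF : Maximal (IsDisjointFamily P g) F) {i : ι} (hi : P i)
    (hne : (g i).Nonempty) : ∃ j ∈ F, (g j ∩ g i).Nonempty := by
  by_contra! hdisj
  have hins : IsDisjointFamily P g (insert i F) :=
    ⟨forall_mem_insert.2 ⟨hi, hF.1.1⟩, hF.1.2.insert fun j hj _ =>
      disjoint_iff_inter_eq_empty.2 (by rw [inter_comm]; exact hdisj j hj)⟩
  have hiF : i ∈ F := hF.2 hins (subset_insert i F) (mem_insert i F)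
  exact hne.ne_empty (by simpa using hdisj i hiF)

end DisjointFamily

section IocPacking

variable {K : Type*} [LinearOrder K] {V : Set K} {F : Set (K × K)}

def IsIocPacking (V : Set K) : Set (K × K) → Prop :=
  IsDisjointFamily (fun M => M.1 ∈ V ∧ M.2 ∈ V ∧ M.1 < M.2) fun M => Ioc M.1 M.2

theorem exists_maximal_isIocPacking (V : Set K) : ∃ F, Maximal (IsIocPacking V) F :=
  exists_maximal_isDisjointFamily _ _

namespace IsIocPacking

theorem fst_notMem_Ioo (hF : IsIocPacking V F) {M N : K × K} (hM : M ∈ F) (hN : N ∈ F) :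
    M.1 ∉ Ioo N.1 N.2 := by
  intro h
  have hmin : M.1 < min M.2 N.2 := lt_min (hF.1 M hM).2.2 h.2
  obtain rfl : M = N := hF.2.elim_set hM hN (min M.2 N.2) ⟨hmin, min_le_left _ _⟩
    ⟨h.1.trans hmin, min_le_right _ _⟩
  exact lt_irrefl _ h.1

theorem snd_notMem_Ioo (hF : IsIocPacking V F) {M N : K × K} (hM : M ∈ F) (hN : N ∈ F) :
    M.2 ∉ Ioo N.1 N.2 := by
  intro h
  obtain rfl : M = N := hF.2.elim_set hM hN M.2 ⟨(hF.1 M hM).2.2, le_rfl⟩ ⟨h.1, h.2.le⟩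
  exact lt_irrefl _ h.2

/-- If a point of `V ∩ (x, y)` lies inside some `(u, v)` with `(u, v) ∈ F`, then `u` or `v` is
in `(x, y)` as well, because `V` does not contain `z`. -/
theorem exists_mem_forall_notMem_Ioo (hF : IsIocPacking V F) (hV : V.OrdConnected) {x y q z : K}
    (hq : q ∈ V ∩ Ioo x y) (hz : z ∈ Ioo x y \ V) :
    ∃ p ∈ V ∩ Ioo x y, ∀ N ∈ F, p ∉ Ioo N.1 N.2 := by
  by_cases hinside : ∃ M ∈ F, q ∈ Ioo M.1 M.2
  swap
  · exact ⟨q, hq, fun N hN hqN => hinside ⟨N, hN, hqN⟩⟩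
  obtain ⟨M, hM, hqM⟩ := hinside
  obtain ⟨hM1, hM2, -⟩ := hF.1 M hM
  have hzM : z < M.1 ∨ M.2 < z := by
    by_contra! h
    exact hz.2 (hV.out hM1 hM2 h)
  rcases hzM with h | h
  · exact ⟨M.1, ⟨hM1, hz.1.1.trans h, hqM.1.trans hq.2.2⟩, fun N hN => hF.fst_notMem_Ioo hM hN⟩
  · exact ⟨M.2, ⟨hM2, hq.2.1.trans hqM.2, h.trans hz.1.2⟩, fun N hN => hF.snd_notMem_Ioo hM hN⟩

theorem exists_le_fst_of_maximal (hF : Maximal (IsIocPacking V) F) {p q : K} (hp : p ∈ V)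
    (hq : q ∈ V) (hpq : p < q) (hfree : ∀ N ∈ F, p ∉ Ioo N.1 N.2) : ∃ M ∈ F, p ≤ M.1 := by
  obtain ⟨M, hM, e, heM, hep⟩ :=
    hF.exists_inter_nonempty_of_isDisjointFamily (i := (p, q)) ⟨hp, hq, hpq⟩ ⟨q, hpq, le_rfl⟩
  exact ⟨M, hM, not_lt.1 fun h => hfree M hM ⟨h, hep.1.trans_le heM.2⟩⟩

theorem exists_snd_le_of_maximal (hF : Maximal (IsIocPacking V) F) {p q : K} (hp : p ∈ V)
    (hq : q ∈ V) (hqp : q < p) (hfree : ∀ N ∈ F, p ∉ Ioo N.1 N.2) : ∃ M ∈ F, M.2 ≤ p := by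
  obtain ⟨M, hM, e, heM, heq⟩ :=
    hF.exists_inter_nonempty_of_isDisjointFamily (i := (q, p)) ⟨hq, hp, hqp⟩ ⟨p, hqp, le_rfl⟩
  exact ⟨M, hM, not_lt.1 fun h => hfree M hM ⟨heM.1.trans_le heq.2, h⟩⟩

end IsIocPacking

end IocPacking

section Topology

variable {K : Type*} [LinearOrder K] [TopologicalSpace K]

def IsSmallConvexPacking (d : K → K → ℝ) (ε : ℝ) : Set (Set K) → Prop :=
  IsDisjointFamily (fun V => IsOpen V ∧ V.OrdConnected ∧ ∀ u ∈ V, ∀ w ∈ V, d u w < ε) id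

theorem exists_maximal_isSmallConvexPacking (d : K → K → ℝ) (ε : ℝ) :
    ∃ 𝒞, Maximal (IsSmallConvexPacking d ε) 𝒞 :=
  exists_maximal_isDisjointFamily _ _

variable [OrderTopology K]

theorem IsOpen.exists_gt_mem_of_Ioo_nonempty {V : Set K} (hV : IsOpen V) {p z : K} (hp : p ∈ V)
    (hpz : p < z) (hdense : ∀ b, p < b → b ≤ z → (Ioo p b).Nonempty) : ∃ q ∈ V, p < q := by
  obtain ⟨r, hpr, hr⟩ := exists_Ico_subset_of_mem_nhds (hV.mem_nhds hp) ⟨z, hpz⟩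
  obtain ⟨q, hpq, hqr⟩ := hdense (min r z) (lt_min hpr hpz) (min_le_right r z)
  exact ⟨q, hr ⟨hpq.le, hqr.trans_le (min_le_left r z)⟩, hpq⟩

theorem IsOpen.exists_lt_mem_of_Ioo_nonempty {V : Set K} (hV : IsOpen V) {p z : K} (hp : p ∈ V)
    (hzp : z < p) (hdense : ∀ a, z ≤ a → a < p → (Ioo a p).Nonempty) : ∃ q ∈ V, q < p := by
  obtain ⟨l, hlp, hl⟩ := exists_Ioc_subset_of_mem_nhds (hV.mem_nhds hp) ⟨z, hzp⟩
  obtain ⟨q, hlq, hqp⟩ := hdense (max l z) (le_max_right l z) (max_lt hlp hzp)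
  exact ⟨q, hl ⟨(le_max_left l z).trans_lt hlq, hqp.le⟩, hqp⟩

/-- Maximality of `F` at a point `p` of `V ∩ (x, y)` not inside any interval of `F` gives a pair
of `F` on the side of `p` facing `z`, and it stops short of `z` because `V` is order-convex. -/
theorem IsIocPacking.exists_mem_Icc_of_maximal {V : Set K} {F : Set (K × K)}
    (hF : Maximal (IsIocPacking V) F) (hVc : V.OrdConnected) (hVo : IsOpen V) {x y q z : K}
    (hdense : ∀ a b, x ≤ a → a < b → b ≤ y → (Ioo a b).Nonempty)
    (hq : q ∈ V ∩ Ioo x y) (hz : z ∈ Ioo x y \ V) : ∃ M ∈ F, x ≤ M.1 ∧ M.2 ≤ y := by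
  obtain ⟨p, ⟨hpV, hxp, hpy⟩, hfree⟩ := hF.1.exists_mem_forall_notMem_Ioo hVc hq hz
  obtain ⟨⟨hxz, hzy⟩, hzV⟩ := hz
  rcases lt_or_gt_of_ne (ne_of_mem_of_not_mem hpV hzV) with hpz | hzp
  · obtain ⟨r, hrV, hpr⟩ := hVo.exists_gt_mem_of_Ioo_nonempty hpV hpz
      fun b hpb hbz => hdense p b hxp.le hpb (hbz.trans hzy.le)
    obtain ⟨M, hM, hpM⟩ := IsIocPacking.exists_le_fst_of_maximal hF hpV hrV hpr hfree
    have hMz : M.2 < z := lt_of_not_ge fun h => hzV (hVc.out hpV (hF.1.1 M hM).2.1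
      ⟨hpz.le, h⟩)
    exact ⟨M, hM, hxp.le.trans hpM, hMz.le.trans hzy.le⟩
  · obtain ⟨r, hrV, hrp⟩ := hVo.exists_lt_mem_of_Ioo_nonempty hpV hzp
      fun a hza hap => hdense a p (hxz.le.trans hza) hap hpy.le
    obtain ⟨M, hM, hMp⟩ := IsIocPacking.exists_snd_le_of_maximal hF hpV hrV hrp hfree
    have hzM : z < M.1 := lt_of_not_ge fun h => hzV (hVc.out (hF.1.1 M hM).1 hpV
      ⟨h, hzp.le⟩)
    exact ⟨M, hM, hxz.le.trans hzM.le, hMp.trans hpy.le⟩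

theorem Set.OrdConnected.interior_of_orderTopology {s : Set K} (hs : s.OrdConnected) :
    (interior s).OrdConnected := by
  refine ⟨fun a ha b hb w hw => ?_⟩
  rcases hw.1.eq_or_lt with rfl | haw
  · exact ha
  rcases hw.2.eq_or_lt with rfl | hwb
  · exact hb
  have hsub : Ioo a b ⊆ s :=
    Ioo_subset_Icc_self.trans (hs.out (interior_subset ha) (interior_subset hb))
  exact interior_maximal hsub isOpen_Ioo ⟨haw, hwb⟩

variable {d : K → K → ℝ} {ε : ℝ}

theorem Fragments.exists_subset_isOpen_ordConnected (hfrag : Fragments d) (hε : 0 < ε)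
    {U : Set K} (hU : IsOpen U) (hne : U.Nonempty) :
    ∃ V ⊆ U, V.Nonempty ∧ IsOpen V ∧ V.OrdConnected ∧ ∀ u ∈ V, ∀ w ∈ V, d u w < ε := by
  obtain ⟨W, hWo, hWne, hW⟩ := hfrag (closure U) hne.closure isClosed_closure ε hε
  obtain ⟨z, hzU, hzW⟩ := (closure_inter_open_nonempty_iff hWo).1 (by rwa [inter_comm])
  obtain ⟨b, c, -, hbc, hsub⟩ :=
    exists_Icc_mem_subset_of_mem_nhds ((hWo.inter hU).mem_nhds ⟨hzW, hzU⟩)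
  have hVsub : interior (Icc b c) ⊆ W ∩ U := interior_subset.trans hsub
  refine ⟨interior (Icc b c), hVsub.trans inter_subset_right,
    ⟨z, mem_interior_iff_mem_nhds.2 hbc⟩, isOpen_interior,
    ordConnected_Icc.interior_of_orderTopology, fun u hu w hw => ?_⟩
  exact hW u ⟨(hVsub hu).1, subset_closure (hVsub hu).2⟩ w
    ⟨(hVsub hw).1, subset_closure (hVsub hw).2⟩

theorem Maximal.exists_inter_nonempty_of_isSmallConvexPacking {𝒞 : Set (Set K)}
    (h𝒞 : Maximal (IsSmallConvexPacking d ε) 𝒞) (hfrag : Fragments d) (hε : 0 < ε)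
    {U : Set K} (hU : IsOpen U) (hne : U.Nonempty) : ∃ V ∈ 𝒞, (V ∩ U).Nonempty := by
  obtain ⟨W, hWU, hWne, hW⟩ := hfrag.exists_subset_isOpen_ordConnected hε hU hne
  obtain ⟨V, hV, hVW⟩ := h𝒞.exists_inter_nonempty_of_isDisjointFamily hW hWne
  exact ⟨V, hV, hVW.mono (inter_subset_inter_right V hWU)⟩

theorem exists_subset_or_exists_mem_Icc {𝒞 : Set (Set K)} {F : Set K → Set (K × K)}
    (h𝒞 : Maximal (IsSmallConvexPacking d ε) 𝒞) (hF : ∀ V, Maximal (IsIocPacking V) (F V))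
    (hfrag : Fragments d) (hε : 0 < ε) {x y : K} (hxy : x < y)
    (hdense : ∀ a b, x ≤ a → a < b → b ≤ y → (Ioo a b).Nonempty) :
    (∃ V ∈ 𝒞, Ioo x y ⊆ V) ∨ ∃ V ∈ 𝒞, ∃ M ∈ F V, x ≤ M.1 ∧ M.2 ≤ y := by
  obtain ⟨V, hV, q, hq⟩ := h𝒞.exists_inter_nonempty_of_isSmallConvexPacking hfrag hε isOpen_Ioo
    (hdense x y le_rfl hxy le_rfl)
  by_cases hsub : Ioo x y ⊆ V
  · exact Or.inl ⟨V, hV, hsub⟩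
  obtain ⟨z, hz⟩ := not_subset.1 hsub
  obtain ⟨hVo, hVc, -⟩ := h𝒞.1.1 V hV
  exact Or.inr ⟨V, hV, IsIocPacking.exists_mem_Icc_of_maximal (hF V) hVc hVo hdense hq hz⟩

end Topology

section SeparatingPairs

variable {K : Type*} [LinearOrder K] {ι : Type*}

def separatingPairs (𝒞 : ι → Set (Set K)) (F : Set K → Set (K × K)) : Set (K × K) :=
  {p | p.1 < p.2 ∧ Ioo p.1 p.2 = ∅} ∪ ⋃ m, ⋃ V ∈ 𝒞 m, F V

theorem fst_lt_snd_of_mem_separatingPairs {𝒞 : ι → Set (Set K)} {F : Set K → Set (K × K)}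
    (hF : ∀ V, IsIocPacking V (F V)) {p : K × K} (hp : p ∈ separatingPairs 𝒞 F) : p.1 < p.2 := by
  rcases hp with ⟨hlt, -⟩ | hp
  · exact hlt
  obtain ⟨m, V, -, hpV⟩ := by simpa only [mem_iUnion, exists_prop] using hp
  exact ((hF V).1 p hpV).2.2

theorem countable_setOf_mem_separatingPairs_mem_Ioo [Countable ι] {𝒞 : ι → Set (Set K)}
    {F : Set K → Set (K × K)} (hconv : ∀ m, ∀ V ∈ 𝒞 m, V.OrdConnected)
    (hdisj : ∀ m, (𝒞 m).PairwiseDisjoint id) (hF : ∀ V, IsIocPacking V (F V)) (x : K) :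
    {p ∈ separatingPairs 𝒞 F | x ∈ Ioo p.1 p.2}.Countable := by
  have hlevel : ∀ m, {p | ∃ V ∈ 𝒞 m, p ∈ F V ∧ x ∈ Ioo p.1 p.2}.Subsingleton := by
    rintro m p ⟨V, hV, hpV, hxp⟩ p' ⟨V', hV', hpV', hxp'⟩
    have hxV : ∀ {V p}, V ∈ 𝒞 m → p ∈ F V → x ∈ Ioo p.1 p.2 → x ∈ V := fun hV hpV hxp =>
      (hconv m _ hV).out ((hF _).1 _ hpV).1 ((hF _).1 _ hpV).2.1 ⟨hxp.1.le, hxp.2.le⟩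
    obtain rfl : V = V' := (hdisj m).elim_set hV hV' x (hxV hV hpV hxp) (hxV hV' hpV' hxp')
    exact (hF V).2.elim_set hpV hpV' x (Ioo_subset_Ioc_self hxp) (Ioo_subset_Ioc_self hxp')
  refine (countable_iUnion fun m => (hlevel m).countable).mono ?_
  rintro p ⟨hp | hp, hxp⟩
  · exact absurd (hp.2 ▸ hxp) (notMem_empty x)
  obtain ⟨m, V, hV, hpV⟩ := by simpa only [mem_iUnion, exists_prop] using hp
  exact mem_iUnion.2 ⟨m, V, hV, hpV, hxp⟩

theorem exists_mem_separatingPairs [TopologicalSpace K] [OrderTopology K] {d : K → K → ℝ}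
    (hd : IsQuasiMetric d) (hfrag : Fragments d) {𝒞 : ℕ → Set (Set K)}
    {F : Set K → Set (K × K)}
    (h𝒞 : ∀ m : ℕ, Maximal (IsSmallConvexPacking d (1 / ((m : ℝ) + 1))) (𝒞 m))
    (hF : ∀ V, Maximal (IsIocPacking V) (F V)) {x y : K} (hxy : x < y) :
    ∃ p ∈ separatingPairs 𝒞 F, x ≤ p.1 ∧ p.2 ≤ y := by
  by_cases hgap : ∃ a b, x ≤ a ∧ a < b ∧ b ≤ y ∧ Ioo a b = ∅
  · obtain ⟨a, b, hxa, hab, hby, hempty⟩ := hgap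
    exact ⟨(a, b), Or.inl ⟨hab, hempty⟩, hxa, hby⟩
  have hdense : ∀ a b, x ≤ a → a < b → b ≤ y → (Ioo a b).Nonempty := fun a b hxa hab hby =>
    nonempty_iff_ne_empty.2 fun hempty => hgap ⟨a, b, hxa, hab, hby, hempty⟩
  obtain ⟨a, hxa, hay⟩ := hdense x y le_rfl hxy le_rfl
  obtain ⟨b, hab, hby⟩ := hdense a y hxa.le hay le_rfl
  have hpos : 0 < d a b := (hd.1 a b).lt_of_ne' fun h => hab.ne ((hd.2.2 a b).1 h)
  obtain ⟨m, hm⟩ := exists_nat_one_div_lt hpos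
  rcases exists_subset_or_exists_mem_Icc (h𝒞 m) hF hfrag (by positivity) hxy hdense with
    ⟨V, hV, hsub⟩ | ⟨V, hV, M, hM, hxM, hMy⟩
  · have hsmall := ((h𝒞 m).1.1 V hV).2.2 a (hsub ⟨hxa, hay⟩) b (hsub ⟨hxa.trans hab, hby⟩)
    exact (hsmall.trans hm).false.elim
  · exact ⟨M, Or.inr (mem_iUnion₂.2 ⟨m, V, mem_iUnion.2 ⟨hV, hM⟩⟩), hxM, hMy⟩

end SeparatingPairs

theorem AlmostTotallyDisconnected.of_pairs {K : Type u} [LinearOrder K]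
    [TopologicalSpace K] [OrderTopology K] [CompactSpace K] (P : Set (K × K))
    (hlt : ∀ p ∈ P, p.1 < p.2) (hsep : ∀ x y, x < y → ∃ p ∈ P, x ≤ p.1 ∧ p.2 ≤ y)
    (hcount : ∀ x, {p ∈ P | x ∈ Ioo p.1 p.2}.Countable) : AlmostTotallyDisconnected K := by
  have hU : ∀ p : P, ∃ g : C(K, ℝ),
      EqOn g 0 (Iic p.1.1) ∧ EqOn g 1 (Ici p.1.2) ∧ ∀ x, g x ∈ Icc (0 : ℝ) 1 := fun p =>
    exists_continuous_zero_one_of_isClosed isClosed_Iic isClosed_Ici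
      (Iic_disjoint_Ici.2 (hlt p.1 p.2).not_ge)
  choose g hg0 hg1 hg01 using hU
  refine ⟨P, fun x p => g p x, ?_, fun x p => hg01 p x, fun x => ?_⟩
  · have hinj : Function.Injective fun x (p : P) => g p x := by
      refine .of_lt_imp_ne fun x y hxy h => ?_
      obtain ⟨p, hp, hxp, hpy⟩ := hsep x y hxy
      have hxy' := congrFun h ⟨p, hp⟩
      rw [hg0 ⟨p, hp⟩ hxp, hg1 ⟨p, hp⟩ hpy] at hxy'
      exact zero_ne_one hxy'
    exact ((continuous_pi fun p => (g p).continuous).isClosedEmbedding hinj).isEmbedding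
  · refine Countable.mono (fun p hp => ?_) ((hcount x).preimage Subtype.val_injective)
    exact ⟨p.2, lt_of_not_ge fun h => hp (Or.inl (hg0 p h)),
      lt_of_not_ge fun h => hp (Or.inr (hg1 p h))⟩

/-- Every linearly ordered fragmentable compact space is almost totally disconnected. -/
theorem linearly_ordered_fragmentable_is_almost_totally_disconnected
    {K : Type u} [LinearOrder K] [TopologicalSpace K] [OrderTopology K] [CompactSpace K]
    (d : K → K → ℝ) (hd : IsQuasiMetric d) (hfrag : Fragments d) :
    AlmostTotallyDisconnected K := by
  choose 𝒞 h𝒞 using fun m : ℕ => exists_maximal_isSmallConvexPacking d (1 / ((m : ℝ) + 1))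
  choose F hF using fun V : Set K => exists_maximal_isIocPacking V
  exact .of_pairs (separatingPairs 𝒞 F)
    (fun p => fst_lt_snd_of_mem_separatingPairs fun V => (hF V).1)
    (fun x y => exists_mem_separatingPairs hd hfrag h𝒞 hF)
    (countable_setOf_mem_separatingPairs_mem_Ioo (fun m V hV => ((h𝒞 m).1.1 V hV).2.1)
      (fun m => (h𝒞 m).1.2) fun V => (hF V).1)
end

section
/- Let K be a linearly ordered compact space and let d : K × K → [0,∞) be a symmetric map with d(x,y) > 0 whenever x ≠ y. Assume that for every ε > 0 and every pair x < y in K with the open interval (x,y) nonempty, there exist u < v in K with the closed interval [u,v] contained in (x,y), the open interval (u,v) nonempty, and sup{d(s,t) : s,t ∈ (u,v)} < ε. Then K is almost totally disconnected. -/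
universe u

open Set Topology

/-!
A pair `p.1 < p.2` carries a Urysohn function that is `0` on `Iic p.1` and `1` on `Ici p.2`, so
its values outside `{0, 1}` are taken only on `Ioo p.1 p.2`. As coordinates take all jumps
(pairs with empty open interval) and, for every `n`, a maximal family of pairwise disjoint
open intervals of `d`-diameter `< 1 / (n + 1)`. A point lies in at most one interval
of each family, so only countably many of its coordinates are not extreme. If `a < b` are not
separated by a jump, pick `a < x < y < b` with `(x, y)` nonempty and `n` with
`1 / (n + 1) ≤ d a x, d y b`. A small interval inside `(x, y)` meets some member of the `n`-th
family, and this member lies in `[a, b]`, since it can contain neither both `a, x` nor both `y, b`.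
-/

theorem Set.PairwiseDisjoint.subsingleton_setOf_mem {ι α : Type*} {s : Set ι} {f : ι → Set α}
    (hs : s.PairwiseDisjoint f) (x : α) : {i ∈ s | x ∈ f i}.Subsingleton :=
  fun _ hi _ hj => hs.elim_set hi.1 hj.1 x hi.2 hj.2

theorem Set.exists_pairwiseDisjoint_maximal {α β : Type*} (G : Set α) (I : α → Set β) :
    ∃ B ⊆ G, B.PairwiseDisjoint I ∧
      ∀ p ∈ G, (I p).Nonempty → ∃ q ∈ B, ¬Disjoint (I p) (I q) := by
  obtain ⟨B, ⟨hBG, hB⟩, hmax⟩ := zorn_subset {B | B ⊆ G ∧ B.PairwiseDisjoint I}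
    fun c hc hchain => ⟨⋃₀ c, ⟨sUnion_subset fun s hs => (hc hs).1,
      (hchain.pairwiseDisjoint_sUnion I).2 fun s hs => (hc hs).2⟩,
      fun _ => subset_sUnion_of_mem⟩
  refine ⟨B, hBG, hB, fun p hp hne => ?_⟩
  by_contra! hdisj
  have hpB : p ∈ B :=
    hmax ⟨insert_subset hp hBG, hB.insert fun q hq _ => hdisj q hq⟩ (subset_insert p B)
      (mem_insert p B)
  exact hne.ne_empty (disjoint_self.1 (hdisj p hpB))

theorem AlmostTotallyDisconnected.of_separating_pairs {K : Type u} [LinearOrder K]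
    [TopologicalSpace K] [OrderTopology K] [CompactSpace K] (S : Set (K × K))
    (hS : ∀ p ∈ S, p.1 < p.2) (hsep : ∀ a b, a < b → ∃ p ∈ S, a ≤ p.1 ∧ p.2 ≤ b)
    (hcount : ∀ x, {p ∈ S | x ∈ Ioo p.1 p.2}.Countable) :
    AlmostTotallyDisconnected K := by
  choose g hg0 hg1 hgI using fun p : S =>
    exists_continuous_zero_one_of_isClosed isClosed_Iic isClosed_Ici
      (Iic_disjoint_Ici.2 (hS p p.2).not_ge)
  let f : K → S → ℝ := fun x p => g p x
  have hf : Continuous f := continuous_pi fun p => (g p).continuous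
  have hinj : Function.Injective f := Function.Injective.of_lt_imp_ne fun a b hab hfab => by
    obtain ⟨p, hp, hap, hpb⟩ := hsep a b hab
    have := congrFun hfab ⟨p, hp⟩
    simp [f, hg0 ⟨p, hp⟩ hap, hg1 ⟨p, hp⟩ hpb] at this
  refine ⟨S, f, (hf.isClosedEmbedding hinj).isEmbedding, fun x p => hgI p x, fun x => ?_⟩
  refine ((hcount x).preimage Subtype.val_injective).mono fun p hp => ?_
  exact ⟨p.2, lt_of_not_ge fun h => hp (.inl (hg0 p h)),
    lt_of_not_ge fun h => hp (.inr (hg1 p h))⟩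

section Intervals

variable {K : Type u} [LinearOrder K]

theorem exists_jump_or_exists_Ioo_nonempty {a b : K} (hab : a < b) :
    (∃ p q, a ≤ p ∧ p < q ∧ q ≤ b ∧ Ioo p q = ∅) ∨
      ∃ x y, a < x ∧ y < b ∧ (Ioo x y).Nonempty := by
  rcases (Ioo a b).eq_empty_or_nonempty with hab' | ⟨x, hax, hxb⟩
  · exact .inl ⟨a, b, le_rfl, hab, le_rfl, hab'⟩
  rcases (Ioo x b).eq_empty_or_nonempty with hxb' | ⟨y, hxy, hyb⟩
  · exact .inl ⟨x, b, hax.le, hxb, le_rfl, hxb'⟩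
  rcases (Ioo x y).eq_empty_or_nonempty with hxy' | hxy'
  · exact .inl ⟨x, y, hax.le, hxy, hyb.le, hxy'⟩
  · exact .inr ⟨x, y, hax, hyb, hxy'⟩

def smallIntervals (d : K → K → ℝ) (ε : ℝ) : Set (K × K) :=
  {p | p.1 < p.2 ∧ ∀ s ∈ Ioo p.1 p.2, ∀ t ∈ Ioo p.1 p.2, d s t < ε}

theorem le_and_le_of_not_disjoint_Ioo {d : K → K → ℝ} {ε : ℝ} {q : K × K}
    (hq : q ∈ smallIntervals d ε) {a b x y : K} (hxyq : ¬Disjoint (Ioo x y) (Ioo q.1 q.2))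
    (hax : a ≤ x) (hyb : y ≤ b) (ha : ε ≤ d a x) (hb : ε ≤ d y b) :
    a ≤ q.1 ∧ q.2 ≤ b := by
  obtain ⟨z, ⟨hxz, hzy⟩, hqz, hzq⟩ := not_disjoint_iff.1 hxyq
  constructor
  · by_contra! h
    have hx : x ∈ Ioo q.1 q.2 := ⟨h.trans_le hax, hxz.trans hzq⟩
    exact (hq.2 a ⟨h, hax.trans_lt hx.2⟩ x hx).not_ge ha
  · by_contra! h
    have hy : y ∈ Ioo q.1 q.2 := ⟨hqz.trans hzy, hyb.trans_lt h⟩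
    exact (hq.2 y hy b ⟨hy.1.trans_le hyb, h⟩).not_ge hb

end Intervals

theorem almost_totally_disconnected_of_interval_fragmentation_general
    {K : Type u} [LinearOrder K] [TopologicalSpace K] [OrderTopology K] [CompactSpace K]
    (d : K → K → ℝ)
    (hpos : ∀ x y : K, x ≠ y → 0 < d x y)
    (hfrag : ∀ ε : ℝ, 0 < ε → ∀ x y : K, x < y → (Set.Ioo x y).Nonempty →
      ∃ u v : K, u < v ∧ Set.Icc u v ⊆ Set.Ioo x y ∧ (Set.Ioo u v).Nonempty ∧
        ∃ c : ℝ, c < ε ∧ ∀ s ∈ Set.Ioo u v, ∀ t ∈ Set.Ioo u v, d s t ≤ c) :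
    AlmostTotallyDisconnected K := by
  have hsmall : ∀ n : ℕ, ∀ x y : K, (Ioo x y).Nonempty →
      ∃ p ∈ smallIntervals d (1 / (n + 1)),
        (Ioo p.1 p.2).Nonempty ∧ Ioo p.1 p.2 ⊆ Ioo x y := by
    rintro n x y ⟨z, hxz, hzy⟩
    obtain ⟨u, v, huv, hIcc, hne, c, hc, hd⟩ :=
      hfrag _ Nat.one_div_pos_of_nat x y (hxz.trans hzy) ⟨z, hxz, hzy⟩
    exact ⟨(u, v), ⟨huv, fun s hs t ht => (hd s hs t ht).trans_lt hc⟩, hne,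
      Ioo_subset_Icc_self.trans hIcc⟩
  choose B hBsmall hBdisj hBmeet using fun n : ℕ =>
    exists_pairwiseDisjoint_maximal (smallIntervals d (1 / (n + 1))) fun p : K × K => Ioo p.1 p.2
  refine .of_separating_pairs ({p | p.1 < p.2 ∧ Ioo p.1 p.2 = ∅} ∪ ⋃ n, B n) ?_ ?_ ?_
  · rintro p (hp | ⟨_, ⟨n, rfl⟩, hp⟩)
    exacts [hp.1, (hBsmall n hp).1]
  · intro a b hab
    rcases exists_jump_or_exists_Ioo_nonempty hab with
      ⟨p, q, hap, hpq, hqb, hjump⟩ | ⟨x, y, hax, hyb, hxy⟩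
    · exact ⟨(p, q), .inl ⟨hpq, hjump⟩, hap, hqb⟩
    obtain ⟨n, hn⟩ := exists_nat_one_div_lt (lt_min (hpos a x hax.ne) (hpos y b hyb.ne))
    obtain ⟨ha, hb⟩ := le_min_iff.1 hn.le
    obtain ⟨p, hp, hne, hpxy⟩ := hsmall n x y hxy
    obtain ⟨q, hq, hpq⟩ := hBmeet n p hp hne
    exact ⟨q, .inr (mem_iUnion.2 ⟨n, hq⟩), le_and_le_of_not_disjoint_Ioo (hBsmall n hq)
      (fun h => hpq (h.mono_left hpxy)) hax.le hyb.le ha hb⟩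
  · intro x
    refine (countable_iUnion fun n => ((hBdisj n).subsingleton_setOf_mem x).countable).mono ?_
    rintro p ⟨hp | ⟨_, ⟨n, rfl⟩, hp⟩, hx⟩
    · exact absurd hx (hp.2 ▸ notMem_empty x)
    · exact mem_iUnion.2 ⟨n, hp, hx⟩

/-- If every nonempty open interval of a linearly ordered compact space contains an
open subinterval (with closure inside it) of arbitrarily small `d`-diameter, for a
symmetric `d` positive off the diagonal, then the space is almost totally disconnected. -/
theorem almost_totally_disconnected_of_interval_fragmentation
    {K : Type u} [LinearOrder K] [TopologicalSpace K] [OrderTopology K] [CompactSpace K]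
    (d : K → K → ℝ)
    (hnonneg : ∀ x y, 0 ≤ d x y)
    (hsymm : ∀ x y, d x y = d y x)
    (hpos : ∀ x y : K, x ≠ y → 0 < d x y)
    (hfrag : ∀ ε : ℝ, 0 < ε → ∀ x y : K, x < y → (Set.Ioo x y).Nonempty →
      ∃ u v : K, u < v ∧ Set.Icc u v ⊆ Set.Ioo x y ∧ (Set.Ioo u v).Nonempty ∧
        ∃ c : ℝ, c < ε ∧ ∀ s ∈ Set.Ioo u v, ∀ t ∈ Set.Ioo u v, d s t ≤ c) :
    AlmostTotallyDisconnected K :=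
  almost_totally_disconnected_of_interval_fragmentation_general d hpos hfrag
end

section
/- Every path-connected almost totally disconnected compact space is a Corson compact: if K is a compact Hausdorff space that is path-connected and there exist a set Γ and a topological embedding f : K → [0,1]^Γ such that {γ ∈ Γ : f(x)(γ) ∉ {0,1}} is countable for every x ∈ K, then there exist a set Γ' and a topological embedding g : K → [0,1]^{Γ'} such that {γ ∈ Γ' : g(x)(γ) ≠ 0} is countable for every x ∈ K. -/
universe u

open Set Topology

/-- Key lemma: if two points of `K` are joined by a path, then the coordinates of
their images under an "almost totally disconnected" embedding differ on at most a
countable set. This follows by the intermediate value theorem: on coordinates where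
both values lie in `{0,1}` but differ, the path must pass through `1/2`, and a
countable-basis argument on the unit interval makes such coordinates countable. -/
theorem joined_coords_countable {K : Type u} [TopologicalSpace K] {Γ : Type u}
    {f : K → Γ → ℝ} (hc : Continuous f)
    (hcnt : ∀ x : K, {γ : Γ | f x γ ∉ ({0, 1} : Set ℝ)}.Countable)
    {x y : K} (hj : Joined x y) :
    {γ : Γ | f x γ ≠ f y γ}.Countable := by
  obtain ⟨p⟩ := hj
  set q : Γ → unitInterval → ℝ := fun γ t => f (p t) γ with hqdef
  have hq : ∀ γ, Continuous (q γ) := fun γ =>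
    (continuous_apply γ).comp (hc.comp p.continuous)
  set B := TopologicalSpace.countableBasis unitInterval with hB
  have hBbasis : TopologicalSpace.IsTopologicalBasis B :=
    TopologicalSpace.isBasis_countableBasis unitInterval
  have hBcnt : B.Countable := TopologicalSpace.countable_countableBasis unitInterval
  classical
  set s : Set unitInterval → unitInterval := fun V =>
    if h : V.Nonempty then h.choose else Classical.arbitrary unitInterval with hs
  set T := {γ : Γ | f x γ ∈ ({0,1} : Set ℝ) ∧ f y γ ∈ ({0,1} : Set ℝ) ∧ f x γ ≠ f y γ}
  have hT : T.Countable := by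
    have hsub : T ⊆ ⋃ V ∈ B, {γ : Γ | f (p (s V)) γ ∉ ({0,1} : Set ℝ)} := by
      intro γ hγ
      obtain ⟨hx01, hy01, hne⟩ := hγ
      -- find t with q γ t = 1/2
      have hhalf : ∃ t : unitInterval, q γ t = 1/2 := by
        have h0 : q γ 0 = f x γ := by simp [hqdef]
        have h1 : q γ 1 = f y γ := by simp [hqdef]
        rcases hx01 with hx0 | hx1
        · have hy1 : f y γ = 1 := by
            rcases hy01 with hy0 | hy1
            · exact absurd (hx0.trans hy0.symm) hne
            · exact hy1
          have : (1/2 : ℝ) ∈ Icc (q γ 0) (q γ 1) := by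
            rw [h0, h1, hx0, hy1]; norm_num
          obtain ⟨t, ht⟩ := intermediate_value_univ (0 : unitInterval) 1 (hq γ) this
          exact ⟨t, ht⟩
        · have hy0 : f y γ = 0 := by
            rcases hy01 with hy0 | hy1
            · exact hy0
            · exact absurd (hx1.trans hy1.symm) hne
          have : (1/2 : ℝ) ∈ Icc (q γ 1) (q γ 0) := by
            rw [h0, h1, hx1, hy0]; norm_num
          obtain ⟨t, ht⟩ := intermediate_value_univ (1 : unitInterval) 0 (hq γ) this
          exact ⟨t, ht⟩
      obtain ⟨t, ht⟩ := hhalf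
      have hUopen : IsOpen (q γ ⁻¹' Ioo (0:ℝ) 1) := (hq γ).isOpen_preimage _ isOpen_Ioo
      have htU : t ∈ q γ ⁻¹' Ioo (0:ℝ) 1 := by
        simp only [mem_preimage, ht]; norm_num
      obtain ⟨V, hVB, htV, hVsub⟩ := hBbasis.exists_subset_of_mem_open htU hUopen
      have hVne : V.Nonempty := ⟨t, htV⟩
      have hsV : s V ∈ V := by
        rw [hs]; simp only [dif_pos hVne]; exact hVne.choose_spec
      refine mem_iUnion₂.2 ⟨V, hVB, ?_⟩
      have : q γ (s V) ∈ Ioo (0:ℝ) 1 := hVsub hsV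
      simp only [mem_setOf_eq]
      intro hmem
      rcases hmem with h0 | h1
      · rw [hqdef] at this; simp only at this
        rw [show f (p (s V)) γ = 0 from h0] at this
        exact lt_irrefl _ this.1
      · rw [hqdef] at this; simp only at this
        rw [show f (p (s V)) γ = (1:ℝ) from h1] at this
        exact lt_irrefl _ this.2
    exact Countable.mono hsub (hBcnt.biUnion fun V _ => hcnt (p (s V)))
  have hsub2 : {γ : Γ | f x γ ≠ f y γ} ⊆
      {γ : Γ | f x γ ∉ ({0,1} : Set ℝ)} ∪ {γ : Γ | f y γ ∉ ({0,1} : Set ℝ)} ∪ T := by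
    intro γ hγ
    by_cases hx : f x γ ∈ ({0,1} : Set ℝ)
    · by_cases hy : f y γ ∈ ({0,1} : Set ℝ)
      · exact Or.inr ⟨hx, hy, hγ⟩
      · exact Or.inl (Or.inr hy)
    · exact Or.inl (Or.inl hx)
  exact Countable.mono hsub2 (((hcnt x).union (hcnt y)).union hT)

/-- Every path-connected almost totally disconnected compact space is Corson compact. -/
theorem pathConnected_almost_totally_disconnected_is_Corson
    {K : Type u} [TopologicalSpace K] [CompactSpace K] [T2Space K] [PathConnectedSpace K]
    (h : AlmostTotallyDisconnected K) :
    ∃ (Γ' : Type u) (g : K → Γ' → ℝ),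
      Topology.IsEmbedding g ∧
      (∀ x γ, g x γ ∈ Set.Icc (0:ℝ) 1) ∧
      (∀ x : K, {γ : Γ' | g x γ ≠ 0}.Countable) := by
  obtain ⟨Γ, f, hemb, hbound, hcnt⟩ := h
  obtain ⟨x₀⟩ : Nonempty K := inferInstance
  have key : ∀ x : K, {γ : Γ | f x γ ≠ f x₀ γ}.Countable := fun x =>
    joined_coords_countable hemb.continuous hcnt (PathConnectedSpace.joined x x₀)
  set g : K → (Γ ⊕ Γ) → ℝ := fun x =>
    Sum.elim (fun γ => max (f x γ - f x₀ γ) 0) (fun γ => max (f x₀ γ - f x γ) 0)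
    with hg
  have hcoord : ∀ γ, Continuous fun x : K => f x γ := fun γ =>
    (continuous_apply γ).comp hemb.continuous
  have hgcont : Continuous g := by
    apply continuous_pi
    rintro (γ | γ)
    · exact ((hcoord γ).sub continuous_const).max continuous_const
    · exact (continuous_const.sub (hcoord γ)).max continuous_const
  have hginj : Function.Injective g := by
    intro x y hxy
    apply hemb.injective
    funext γ
    have h1 : max (f x γ - f x₀ γ) 0 = max (f y γ - f x₀ γ) 0 :=
      congrFun hxy (Sum.inl γ)
    have h2 : max (f x₀ γ - f x γ) 0 = max (f x₀ γ - f y γ) 0 :=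
      congrFun hxy (Sum.inr γ)
    have e1 : ∀ u : ℝ, max u 0 - max (-u) 0 = u := by
      intro u
      rcases le_total u 0 with h | h
      · rw [max_eq_right h, max_eq_left (neg_nonneg.2 h)]; ring
      · rw [max_eq_left h, max_eq_right (neg_nonpos.2 h)]; ring
    have := congrArg₂ (· - ·) h1 h2
    have hx' : f x γ - f x₀ γ = f y γ - f x₀ γ := by
      have ex := e1 (f x γ - f x₀ γ)
      have ey := e1 (f y γ - f x₀ γ)
      rw [neg_sub] at ex ey
      linarith [ex, ey, this]
    linarith
  have hgemb : Topology.IsEmbedding g :=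
    (hgcont.isClosedEmbedding hginj).isEmbedding
  refine ⟨Γ ⊕ Γ, g, hgemb, ?_, ?_⟩
  · rintro x (γ | γ) <;>
    · constructor
      · simp [hg]
      · simp only [hg, Sum.elim_inl, Sum.elim_inr, max_le_iff]
        constructor
        · linarith [(hbound x γ).1, (hbound x γ).2, (hbound x₀ γ).1, (hbound x₀ γ).2]
        · norm_num
  · intro x
    have hsub : {c : Γ ⊕ Γ | g x c ≠ 0} ⊆
        Sum.inl '' {γ | f x γ ≠ f x₀ γ} ∪ Sum.inr '' {γ | f x γ ≠ f x₀ γ} := by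
      rintro (γ | γ) hc
      · refine Or.inl ⟨γ, ?_, rfl⟩
        simp only [hg, Sum.elim_inl, mem_setOf_eq, ne_eq] at hc ⊢
        intro he; apply hc; rw [he]; simp
      · refine Or.inr ⟨γ, ?_, rfl⟩
        simp only [hg, Sum.elim_inr, mem_setOf_eq, ne_eq] at hc ⊢
        intro he; apply hc; rw [he]; simp
    exact Countable.mono hsub (((key x).image _).union ((key x).image _))
end

section
/- Every separable connected almost totally disconnected compact space is metrizable: if K is a compact Hausdorff space that is separable and connected, and there exist a set Γ and a topological embedding f : K → [0,1]^Γ such that {γ ∈ Γ : f(x)(γ) ∉ {0,1}} is countable for every x ∈ K, then the topology of K is metrizable. -/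
universe u

open Set Topology

/-- Every separable connected almost totally disconnected compact space is metrizable. -/
theorem separable_connected_almost_totally_disconnected_is_metrizable
    {K : Type u} [TopologicalSpace K] [CompactSpace K] [T2Space K]
    [TopologicalSpace.SeparableSpace K] [ConnectedSpace K]
    (h : AlmostTotallyDisconnected K) :
    TopologicalSpace.MetrizableSpace K := by
  obtain ⟨Γ, f, hemb, hrange, hcount⟩ := h
  obtain ⟨D, hDc, hDd⟩ := TopologicalSpace.exists_countable_dense K
  -- the countable set of coordinates where some point of D is not 0/1
  set Γ₀ : Set Γ := ⋃ x ∈ D, {γ : Γ | f x γ ∉ ({0, 1} : Set ℝ)} with hΓ₀def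
  have hΓ₀c : Γ₀.Countable := hDc.biUnion fun x _ => hcount x
  have hfc : Continuous f := hemb.continuous
  -- coordinates outside Γ₀ are constant
  have hconst : ∀ γ ∉ Γ₀, ∀ x y : K, f x γ = f y γ := by
    intro γ hγ x y
    have hcg : Continuous fun z : K => f z γ := (continuous_apply γ).comp hfc
    have hval : ∀ z : K, f z γ ∈ ({0, 1} : Set ℝ) := by
      intro z
      have hclosed : IsClosed ((fun z : K => f z γ) ⁻¹' ({0, 1} : Set ℝ)) :=
        IsClosed.preimage hcg (Set.Finite.isClosed (by simp))
      have hD : D ⊆ (fun z : K => f z γ) ⁻¹' ({0, 1} : Set ℝ) := by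
        intro d hd
        by_contra hnot
        exact hγ (Set.mem_biUnion hd hnot)
      have := hclosed.closure_subset_iff.mpr hD
      rw [hDd.closure_eq] at this
      exact this (Set.mem_univ z)
    by_contra hne
    have hx' := hval x
    have hy' := hval y
    simp only [Set.mem_insert_iff, Set.mem_singleton_iff] at hx' hy'
    rcases hx' with hx | hx <;> rcases hy' with hy | hy
    · exact hne (hx.trans hy.symm)
    · have : Set.Icc (f x γ) (f y γ) ⊆ Set.range fun z : K => f z γ :=
        intermediate_value_univ x y hcg
      have hmem : (1/2 : ℝ) ∈ Set.Icc (f x γ) (f y γ) := by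
        rw [hx, hy]; constructor <;> norm_num
      obtain ⟨z, hz⟩ := this hmem
      have hv := hval z
      simp only at hz
      rw [hz] at hv
      simp only [Set.mem_insert_iff, Set.mem_singleton_iff] at hv
      rcases hv with hv | hv <;> norm_num at hv
    · have : Set.Icc (f y γ) (f x γ) ⊆ Set.range fun z : K => f z γ :=
        intermediate_value_univ y x hcg
      have hmem : (1/2 : ℝ) ∈ Set.Icc (f y γ) (f x γ) := by
        rw [hx, hy]; constructor <;> norm_num
      obtain ⟨z, hz⟩ := this hmem
      have hv := hval z
      simp only at hz
      rw [hz] at hv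
      simp only [Set.mem_insert_iff, Set.mem_singleton_iff] at hv
      rcases hv with hv | hv <;> norm_num at hv
    · exact hne (hx.trans hy.symm)
  -- the restricted map to the countable coordinate set
  haveI : Countable Γ₀ := hΓ₀c.to_subtype
  let g : K → Γ₀ → ℝ := fun x γ => f x γ.1
  have hgc : Continuous g := by
    apply continuous_pi
    intro γ
    exact (continuous_apply γ.1).comp hfc
  have hginj : Function.Injective g := by
    intro x y hxy
    apply hemb.injective
    funext γ
    by_cases hγ : γ ∈ Γ₀
    · exact congrFun hxy ⟨γ, hγ⟩
    · exact hconst γ hγ x y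
  have hgemb : Topology.IsEmbedding g :=
    (hgc.isClosedEmbedding hginj).toIsEmbedding
  exact hgemb.metrizableSpace
end

section
/- Let Γ be a set and let L be a subset of [0,1]^Γ (with the product topology) that is separable and connected, and such that for every p ∈ L the set {γ ∈ Γ : p(γ) ∉ {0,1}} is countable. Then there exists a countable set Γ_L ⊆ Γ such that for every γ ∈ Γ \ Γ_L the coordinate map p ↦ p(γ) is constant on L, with constant value equal to 0 or to 1. -/
universe u

open Set Topology

/-! Only the coordinates in which some point of a countable dense subset `D ⊆ L` leaves `{0, 1}`
are exceptional. Off these, a coordinate map sends `D`, hence its closure `⊇ L`, into the closed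
discrete set `{0, 1}`, and is therefore constant on the connected set `L`. -/

theorem IsPreconnected.eqOn_const_or_eqOn_const_of_mapsTo_pair {X Y : Type*} [TopologicalSpace X]
    [TopologicalSpace Y] [T1Space Y] {S : Set X} (hS : IsPreconnected S) {f : X → Y}
    (hf : ContinuousOn f S) {a b : Y} (hfS : MapsTo f S {a, b}) :
    (∀ x ∈ S, f x = a) ∨ (∀ x ∈ S, f x = b) := by
  obtain ⟨y, hy, hconst⟩ :=
    hS.eqOn_const_of_mapsTo (toFinite _).isDiscrete hf hfS (insert_nonempty a {b})
  rcases hy with rfl | rfl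
  · exact .inl hconst
  · exact .inr hconst

theorem coordinates_constant_on_separable_connected_general
    {Γ : Type u} (L : Set (Γ → ℝ))
    (hsep : ∃ D : Set (Γ → ℝ), D ⊆ L ∧ D.Countable ∧ L ⊆ closure D)
    (hconn : IsConnected L)
    (hcount : ∀ p ∈ L, {γ : Γ | p γ ∉ ({0, 1} : Set ℝ)}.Countable) :
    ∃ ΓL : Set Γ, ΓL.Countable ∧
      ∀ γ ∉ ΓL, (∀ p ∈ L, p γ = 0) ∨ (∀ p ∈ L, p γ = 1) := by
  obtain ⟨D, hDL, hDc, hLD⟩ := hsep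
  refine ⟨⋃ p ∈ D, {γ | p γ ∉ ({0, 1} : Set ℝ)},
    hDc.biUnion fun p hp => hcount p (hDL hp), fun γ hγ => ?_⟩
  have hD : MapsTo (fun p : Γ → ℝ => p γ) D {0, 1} := fun p hp =>
    not_not.1 fun hp' => hγ (mem_biUnion hp hp')
  have hL : MapsTo (fun p : Γ → ℝ => p γ) L {0, 1} :=
    (hD.closure_left (continuous_apply γ) (toFinite _).isClosed).mono_left hLD
  exact hconn.isPreconnected.eqOn_const_or_eqOn_const_of_mapsTo_pair
    (continuous_apply γ).continuousOn hL

/-- For a separable connected subset of `[0,1]^Γ` all whose points have all but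
countably many coordinates in `{0,1}`, all but countably many coordinate maps are
constant on the set, with value `0` or `1`. -/
theorem coordinates_constant_on_separable_connected
    {Γ : Type u} (L : Set (Γ → ℝ))
    (hsub : ∀ p ∈ L, ∀ γ : Γ, p γ ∈ Set.Icc (0:ℝ) 1)
    (hsep : ∃ D : Set (Γ → ℝ), D ⊆ L ∧ D.Countable ∧ L ⊆ closure D)
    (hconn : IsConnected L)
    (hcount : ∀ p ∈ L, {γ : Γ | p γ ∉ ({0, 1} : Set ℝ)}.Countable) :
    ∃ ΓL : Set Γ, ΓL.Countable ∧
      ∀ γ ∉ ΓL, (∀ p ∈ L, p γ = 0) ∨ (∀ p ∈ L, p γ = 1) :=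
  coordinates_constant_on_separable_connected_general L hsep hconn hcount
end

section
/- Let Γ be a set and let K ⊆ [0,1]^Γ be a path-connected subset such that for every p ∈ K the set {γ ∈ Γ : p(γ) ∉ {0,1}} is countable. Suppose some x ∈ K satisfies that {γ ∈ Γ : x(γ) ≠ 0} is countable. Then every y ∈ K satisfies that {γ ∈ Γ : y(γ) ≠ 0} is countable. -/
universe u

open Set Topology

/-- In a path-connected subset of `[0,1]^Γ` all whose points have all but countably
many coordinates in `{0,1}`, if one point has countable support then so does every
other point. -/
theorem countable_support_of_pathConnected
    {Γ : Type u} (K : Set (Γ → ℝ))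
    (hsub : ∀ p ∈ K, ∀ γ : Γ, p γ ∈ Set.Icc (0:ℝ) 1)
    (hcount : ∀ p ∈ K, {γ : Γ | p γ ∉ ({0, 1} : Set ℝ)}.Countable)
    (hpc : IsPathConnected K)
    (x : Γ → ℝ) (hx : x ∈ K) (hxc : {γ : Γ | x γ ≠ 0}.Countable) :
    ∀ y ∈ K, {γ : Γ | y γ ≠ 0}.Countable := by
  intro y hy
  obtain ⟨p, hp⟩ := (hpc.joinedIn x hx y hy)
  obtain ⟨D, hDc, hDd⟩ := TopologicalSpace.exists_countable_dense unitInterval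
  have hsubset : {γ : Γ | y γ ≠ 0} ⊆
      {γ : Γ | x γ ≠ 0} ∪ ⋃ t ∈ D, {γ : Γ | p t γ ∉ ({0, 1} : Set ℝ)} := by
    intro γ0 hγ0
    by_cases hxγ : x γ0 ≠ 0
    · exact Or.inl hxγ
    push_neg at hxγ
    right
    -- the coordinate function along the path
    have hf : Continuous fun t : unitInterval => p t γ0 :=
      (continuous_apply γ0).comp p.continuous
    have hy01 := hsub y hy γ0
    have hypos : 0 < y γ0 := lt_of_le_of_ne hy01.1 (Ne.symm hγ0)
    -- there is some t with p t γ0 ∈ (0,1)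
    have hex : ∃ t : unitInterval, p t γ0 ∈ Set.Ioo (0:ℝ) 1 := by
      have hmid : y γ0 / 2 ∈ Set.Icc ((fun t : unitInterval => p t γ0) 0)
          ((fun t : unitInterval => p t γ0) 1) := by
        simp only [p.source, p.target, hxγ]
        constructor
        · linarith
        · linarith [hy01.2]
      obtain ⟨t, ht⟩ := intermediate_value_univ (0 : unitInterval) 1 hf hmid
      refine ⟨t, ?_⟩
      simp only [] at ht
      rw [show p t γ0 = y γ0 / 2 from ht]
      exact ⟨by linarith, by linarith [hy01.2]⟩
    obtain ⟨t, ht⟩ := hex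
    -- the set of such t is open and nonempty, so meets D
    have hopen : IsOpen {t : unitInterval | p t γ0 ∈ Set.Ioo (0:ℝ) 1} :=
      isOpen_Ioo.preimage hf
    obtain ⟨q, hqD, hq⟩ := hDd.exists_mem_open hopen ⟨t, ht⟩
    refine Set.mem_biUnion hqD ?_
    simp only [Set.mem_setOf_eq, Set.mem_insert_iff, Set.mem_singleton_iff]
    push_neg
    exact ⟨ne_of_gt hq.1, ne_of_lt hq.2⟩
  refine Set.Countable.mono hsubset (hxc.union ?_)
  exact Set.Countable.biUnion hDc fun t _ => hcount (p t) (hp t)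
end

section
/- The split interval (double-arrow space) is not fragmentable: let K = [0,1] × {0,1} be ordered lexicographically and equipped with its order topology; then there is no quasi metric d on K that fragments K. -/
universe u

open Set Topology

/-- The split interval: `[0,1] × {0,1}` with the lexicographic order. -/
abbrev SplitInterval : Type := Lex (Set.Icc (0:ℝ) 1 × Bool)

/-- The order topology on the split interval. -/
noncomputable instance : TopologicalSpace SplitInterval := Preorder.topology SplitInterval

instance : OrderTopology SplitInterval := ⟨rfl⟩

/-!
Since `d` vanishes only on the diagonal, the twins `(x, 0) < (x, 1)` are at positive distance, so
for some `ε > 0` the set `A` of those `x` whose twins are `ε`-apart is uncountable. Removing the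
countably many points of `A` that have a one-sided neighbourhood meeting `A` in a countable set,
we may assume every point of `A` is approached by `A` from both sides. Let `L` be the closure of
the set of twins over `A`. An open set `U` meeting `L` contains a twin over `A`, hence a half-open
interval ending there (to the left of `(x, 0)`, to the right of `(x, 1)`), hence both twins of a
nearby point of `A`; they lie in `U ∩ L` at distance at least `ε`.
-/

section SecondCountableOrder

variable {α : Type*} [LinearOrder α] [TopologicalSpace α] [OrderTopology α]
  [SecondCountableTopology α]

theorem Set.countable_of_forall_countable_inter_Iio {B : Set α}
    (h : ∀ x ∈ B, (B ∩ Iio x).Countable) : B.Countable := by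
  -- Lindelöf: countably many `Iio x`, `x ∈ B`, cover every non-maximal point of `B`.
  obtain ⟨T, hT, hTU⟩ := TopologicalSpace.isOpen_iUnion_countable
    (fun x : B => Iio (x : α)) fun _ => isOpen_Iio
  have hcover : B ⊆ {x ∈ B | ∀ y ∈ B, y ≤ x} ∪ ⋃ x ∈ T, B ∩ Iio (x : α) := by
    intro x hx
    by_cases hmax : ∀ y ∈ B, y ≤ x
    · exact Or.inl ⟨hx, hmax⟩
    push Not at hmax
    obtain ⟨y, hyB, hxy⟩ := hmax
    have : x ∈ ⋃ i ∈ T, Iio (i : α) := hTU ▸ mem_iUnion.2 ⟨⟨y, hyB⟩, hxy⟩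
    obtain ⟨i, hiT, hxi⟩ := mem_iUnion₂.1 this
    exact Or.inr (mem_iUnion₂.2 ⟨i, hiT, hx, hxi⟩)
  refine (Countable.union ?_ (hT.biUnion fun i _ => h i i.2)).mono hcover
  exact Subsingleton.countable fun x hx y hy => le_antisymm (hy.2 x hx.1) (hx.2 y hy.1)

variable [DenselyOrdered α]

theorem Set.countable_setOf_exists_mem_nhdsLT_countable_inter (A : Set α) :
    {x ∈ A | ∃ t ∈ 𝓝[<] x, (A ∩ t).Countable}.Countable := by
  obtain ⟨D, hD, hDense⟩ := TopologicalSpace.exists_countable_dense α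
  have hcover : {x ∈ A | ∃ t ∈ 𝓝[<] x, (A ∩ t).Countable} ⊆
      {x | IsBot x} ∪ ⋃ q ∈ D, {x ∈ A | q < x ∧ (A ∩ Ioo q x).Countable} := by
    rintro x ⟨hxA, t, ht, hAt⟩
    by_cases hbot : IsBot x
    · exact Or.inl hbot
    obtain ⟨l', hl'⟩ : ∃ l', l' < x := by simpa [IsBot] using hbot
    obtain ⟨l, hlx, hlt⟩ := (mem_nhdsLT_iff_exists_Ioo_subset' hl').1 ht
    obtain ⟨q, hqD, hlq, hqx⟩ := hDense.exists_between hlx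
    refine Or.inr (mem_iUnion₂.2 ⟨q, hqD, hxA, hqx, hAt.mono ?_⟩)
    exact inter_subset_inter_right A ((Ioo_subset_Ioo_left hlq.le).trans hlt)
  refine Countable.mono hcover ((subsingleton_isBot α).countable.union
    (hD.biUnion fun q _ => countable_of_forall_countable_inter_Iio fun x hx => ?_))
  refine hx.2.2.mono fun y hy => ?_
  exact ⟨hy.1.1, hy.1.2.1, hy.2⟩

theorem Set.countable_setOf_exists_mem_nhdsGT_countable_inter (A : Set α) :
    {x ∈ A | ∃ t ∈ 𝓝[>] x, (A ∩ t).Countable}.Countable :=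
  countable_setOf_exists_mem_nhdsLT_countable_inter (α := αᵒᵈ) A

theorem Set.exists_subset_forall_mem_closure_Iio_Ioi {A : Set α} (hA : ¬A.Countable) :
    ∃ A₀ ⊆ A, A₀.Nonempty ∧ ∀ x ∈ A₀, x ∈ closure (A₀ ∩ Iio x) ∧ x ∈ closure (A₀ ∩ Ioi x) := by
  set C := {x ∈ A | ∃ t ∈ 𝓝[<] x, (A ∩ t).Countable} ∪
    {x ∈ A | ∃ t ∈ 𝓝[>] x, (A ∩ t).Countable}
  have hC : C.Countable := (countable_setOf_exists_mem_nhdsLT_countable_inter A).union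
    (countable_setOf_exists_mem_nhdsGT_countable_inter A)
  have hmeet (t : Set α) (ht : ¬(A ∩ t).Countable) : ((A \ C) ∩ t).Nonempty := by
    by_contra h
    exact ht (hC.mono fun y hy => by_contra fun hyC => h ⟨y, ⟨hy.1, hyC⟩, hy.2⟩)
  refine ⟨A \ C, sdiff_subset, by simpa using hmeet univ (by simpa using hA), fun x hx => ⟨?_, ?_⟩⟩
  · refine mem_closure_iff_nhds.2 fun t ht => ?_
    obtain ⟨y, hy, hyx, hyt⟩ := hmeet (Iio x ∩ t) fun hc =>
      hx.2 (Or.inl ⟨hx.1, _, inter_mem_nhdsWithin _ ht, hc⟩)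
    exact ⟨y, hyt, hy, hyx⟩
  · refine mem_closure_iff_nhds.2 fun t ht => ?_
    obtain ⟨y, hy, hyx, hyt⟩ := hmeet (Ioi x ∩ t) fun hc =>
      hx.2 (Or.inr ⟨hx.1, _, inter_mem_nhdsWithin _ ht, hc⟩)
    exact ⟨y, hyt, hy, hyx⟩

end SecondCountableOrder

section LexBool

variable {α : Type*} [LinearOrder α] [TopologicalSpace α] [OrderTopology α]
  [TopologicalSpace (α ×ₗ Bool)] [OrderTopology (α ×ₗ Bool)]

theorem exists_forall_toLex_mem_of_mem_nhds_toLex_false {s : Set α} {x : α}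
    (hx : x ∈ closure (s ∩ Iio x)) {U : Set (α ×ₗ Bool)} (hU : U ∈ 𝓝 (toLex (x, false))) :
    ∃ y ∈ s, ∀ b, toLex (y, b) ∈ U := by
  obtain ⟨y₀, -, hy₀x⟩ := closure_nonempty_iff.1 ⟨x, hx⟩
  obtain ⟨l, hl, hlU⟩ := exists_Ioc_subset_of_mem_nhds hU
    ⟨toLex (y₀, false), Prod.Lex.toLex_lt_toLex.2 (Or.inl hy₀x)⟩
  have hlx : (ofLex l).1 < x := by
    rcases Prod.Lex.lt_iff.1 hl with h | ⟨-, h⟩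
    · exact h
    · exact absurd h (Bool.false_le _).not_gt
  obtain ⟨y, hly, hy, hyx⟩ := mem_closure_iff_nhds.1 hx _ (Ioi_mem_nhds hlx)
  exact ⟨y, hy, fun b => hlU
    ⟨Prod.Lex.lt_iff.2 (Or.inl hly), Prod.Lex.toLex_le_toLex.2 (Or.inl hyx)⟩⟩

theorem exists_forall_toLex_mem_of_mem_nhds_toLex_true {s : Set α} {x : α}
    (hx : x ∈ closure (s ∩ Ioi x)) {U : Set (α ×ₗ Bool)} (hU : U ∈ 𝓝 (toLex (x, true))) :
    ∃ y ∈ s, ∀ b, toLex (y, b) ∈ U := by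
  obtain ⟨y₀, -, hxy₀⟩ := closure_nonempty_iff.1 ⟨x, hx⟩
  obtain ⟨r, hr, hrU⟩ := exists_Ico_subset_of_mem_nhds hU
    ⟨toLex (y₀, true), Prod.Lex.toLex_lt_toLex.2 (Or.inl hxy₀)⟩
  have hxr : x < (ofLex r).1 := by
    rcases Prod.Lex.lt_iff.1 hr with h | ⟨-, h⟩
    · exact h
    · exact absurd h (Bool.le_true _).not_gt
  obtain ⟨y, hyr, hy, hxy⟩ := mem_closure_iff_nhds.1 hx _ (Iio_mem_nhds hxr)
  exact ⟨y, hy, fun b => hrU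
    ⟨Prod.Lex.toLex_le_toLex.2 (Or.inl hxy), Prod.Lex.lt_iff.2 (Or.inl hyr)⟩⟩

theorem exists_forall_toLex_mem_of_isOpen {s : Set α}
    (hs : ∀ x ∈ s, x ∈ closure (s ∩ Iio x) ∧ x ∈ closure (s ∩ Ioi x))
    {U : Set (α ×ₗ Bool)} (hU : IsOpen U) (hUs : (U ∩ {p | (ofLex p).1 ∈ s}).Nonempty) :
    ∃ y ∈ s, ∀ b, toLex (y, b) ∈ U := by
  obtain ⟨⟨x, b⟩, hxU, hx⟩ := hUs
  cases b
  · exact exists_forall_toLex_mem_of_mem_nhds_toLex_false (hs x hx).1 (hU.mem_nhds hxU)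
  · exact exists_forall_toLex_mem_of_mem_nhds_toLex_true (hs x hx).2 (hU.mem_nhds hxU)

end LexBool

theorem IsQuasiMetric.pos {K : Type*} {d : K → K → ℝ} (hd : IsQuasiMetric d) {x y : K}
    (hxy : x ≠ y) : 0 < d x y :=
  (hd.1 x y).lt_of_ne fun h => hxy ((hd.2.2 x y).1 h.symm)

theorem exists_pos_not_countable_setOf_le {X : Type*} [Uncountable X] {f : X → ℝ}
    (hf : ∀ x, 0 < f x) : ∃ ε > 0, ¬{x | ε ≤ f x}.Countable := by
  by_contra! h
  refine not_countable_univ (Countable.mono (fun x _ => ?_)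
    (countable_iUnion fun n : ℕ => h (1 / (n + 1)) Nat.one_div_pos_of_nat))
  obtain ⟨n, hn⟩ := exists_nat_one_div_lt (hf x)
  exact mem_iUnion.2 ⟨n, hn.le⟩

/-- The split interval is not fragmentable: no quasi metric fragments it. -/
theorem splitInterval_not_fragmentable
    (d : SplitInterval → SplitInterval → ℝ) (hd : IsQuasiMetric d) :
    ¬ Fragments d := by
  intro hF
  have : Uncountable (Icc (0 : ℝ) 1) := by
    rw [← not_countable_iff, countable_coe_iff]
    simp
  obtain ⟨ε, hε, hA⟩ := exists_pos_not_countable_setOf_le fun x : Icc (0 : ℝ) 1 =>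
    hd.pos (x := toLex (x, false)) (y := toLex (x, true)) (by simp)
  obtain ⟨A₀, hA₀, ⟨x, hx⟩, hacc⟩ := exists_subset_forall_mem_closure_Iio_Ioi hA
  set S : Set SplitInterval := {p | (ofLex p).1 ∈ A₀}
  obtain ⟨U, hU, hUS, hsmall⟩ :=
    hF (closure S) ⟨toLex (x, false), subset_closure hx⟩ isClosed_closure ε hε
  obtain ⟨y, hy, hyU⟩ := exists_forall_toLex_mem_of_isOpen hacc hU
    (closure_nonempty_iff.1 (hUS.mono hU.inter_closure))
  exact (hsmall _ ⟨hyU false, subset_closure hy⟩ _ ⟨hyU true, subset_closure hy⟩).not_ge (hA₀ hy)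
end

section
/- Let K = [0,1] × {0,1} be the split interval (lexicographic order, order topology), let ε > 0, let B ⊆ (0,1) be a set such that every point of B is a limit of points of B both from the right and from the left, and let d : K × K → [0,∞) be a symmetric map with d((x,0),(x,1)) > ε for every x ∈ B. Then the subset B × {0,1} of K contains no nonempty relatively open subset of d-diameter less than ε; that is, for every open set U of K with U ∩ (B × {0,1}) nonempty, there exist points p,q ∈ U ∩ (B × {0,1}) with d(p,q) ≥ ε. -/
/-!
In the split interval the left copy `(x, 0)` is the limit of both copies `(y, 0)`, `(y, 1)` as
`y → x⁻`, and the right copy `(x, 1)` is their limit as `y → x⁺` (for `0 < x < 1`). Hence an open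
set containing a copy of `x ∈ B` contains both copies of every `y` close to `x` on the matching
side, and since `x` is a two-sided limit of `B` some such `y` lies in `B`; its two copies are at
`d`-distance more than `ε`.
-/

universe u

open Set Topology

open Filter

namespace SplitInterval

/-- The point `(y, j)` of the split interval; `y` is clamped to `[0,1]` to make this total on `ℝ`. -/
noncomputable def ofReal (j : Bool) (y : ℝ) : SplitInterval :=
  toLex (projIcc 0 1 zero_le_one y, j)

lemma ofReal_lt_toLex {y : ℝ} {x : Icc (0:ℝ) 1} (j k : Bool) (hy : 0 ≤ y) (hyx : y < x) :
    ofReal j y < toLex (x, k) := by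
  refine Prod.Lex.toLex_lt_toLex.2 (Or.inl ?_)
  rw [projIcc_of_mem _ ⟨hy, hyx.le.trans x.2.2⟩]
  exact hyx

lemma toLex_lt_ofReal {y : ℝ} {x : Icc (0:ℝ) 1} (j k : Bool) (hy : y ≤ 1) (hxy : (x:ℝ) < y) :
    toLex (x, k) < ofReal j y := by
  refine Prod.Lex.toLex_lt_toLex.2 (Or.inl ?_)
  rw [projIcc_of_mem _ ⟨x.2.1.trans hxy.le, hy⟩]
  exact hxy

lemma tendsto_ofReal_nhdsLT (j : Bool) {x : Icc (0:ℝ) 1} (hx : 0 < (x:ℝ)) :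
    Tendsto (ofReal j) (𝓝[<] (x:ℝ)) (𝓝 (toLex (x, false))) := by
  refine tendsto_order.2 ⟨fun a ha => ?_, fun a ha => ?_⟩
  · obtain ⟨⟨z, k⟩, rfl⟩ := toLex.surjective a
    have hzx : (z:ℝ) < x := by
      rcases Prod.Lex.toLex_lt_toLex.1 ha with hzx | ⟨-, hk⟩
      · exact hzx
      · cases k <;> cases hk
    filter_upwards [Ioo_mem_nhdsLT hzx] with y hy
    exact toLex_lt_ofReal j k (hy.2.le.trans x.2.2) hy.1
  · filter_upwards [Ioo_mem_nhdsLT hx] with y hy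
    exact (ofReal_lt_toLex j false hy.1.le hy.2).trans ha

lemma tendsto_ofReal_nhdsGT (j : Bool) {x : Icc (0:ℝ) 1} (hx : (x:ℝ) < 1) :
    Tendsto (ofReal j) (𝓝[>] (x:ℝ)) (𝓝 (toLex (x, true))) := by
  refine tendsto_order.2 ⟨fun a ha => ?_, fun a ha => ?_⟩
  · filter_upwards [Ioo_mem_nhdsGT hx] with y hy
    exact ha.trans (toLex_lt_ofReal j true hy.2.le hy.1)
  · obtain ⟨⟨z, k⟩, rfl⟩ := toLex.surjective a
    have hxz : (x:ℝ) < z := by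
      rcases Prod.Lex.toLex_lt_toLex.1 ha with hxz | ⟨-, hk⟩
      · exact hxz
      · cases k <;> cases hk
    filter_upwards [Ioo_mem_nhdsGT hxz] with y hy
    exact ofReal_lt_toLex j k (x.2.1.trans hy.1.le) hy.2

end SplitInterval

open SplitInterval

theorem splitInterval_no_small_open_subset_general
    (ε : ℝ) (B : Set ℝ) (hB : B ⊆ Set.Ioo (0:ℝ) 1)
    (hlim : ∀ x ∈ B, ∀ δ : ℝ, 0 < δ →
      (∃ b ∈ B, x - δ < b ∧ b < x) ∧ (∃ b' ∈ B, x < b' ∧ b' < x + δ))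
    (d : SplitInterval → SplitInterval → ℝ)
    (hd : ∀ x : Set.Icc (0:ℝ) 1, (x : ℝ) ∈ B →
      ε < d (toLex (x, false)) (toLex (x, true))) :
    ∀ U : Set SplitInterval, IsOpen U →
      (U ∩ {p : SplitInterval | ((ofLex p).1 : ℝ) ∈ B}).Nonempty →
      ∃ p ∈ U ∩ {p : SplitInterval | ((ofLex p).1 : ℝ) ∈ B},
        ∃ q ∈ U ∩ {p : SplitInterval | ((ofLex p).1 : ℝ) ∈ B}, ε ≤ d p q := by
  rintro U hU ⟨p, hpU, hpB⟩
  obtain ⟨⟨x, i⟩, rfl⟩ := toLex.surjective p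
  have hx : (x:ℝ) ∈ Ioo 0 1 := hB hpB
  suffices ∃ y ∈ B, ofReal false y ∈ U ∧ ofReal true y ∈ U by
    obtain ⟨y, hyB, hy₀, hy₁⟩ := this
    have hyB' : ((projIcc 0 1 zero_le_one y : Icc (0:ℝ) 1) : ℝ) ∈ B := by
      rwa [projIcc_of_mem _ (Ioo_subset_Icc_self (hB hyB))]
    exact ⟨_, ⟨hy₀, hyB'⟩, _, ⟨hy₁, hyB'⟩, (hd _ hyB').le⟩
  have hUp := hU.mem_nhds hpU
  cases i
  · obtain ⟨a, hax, hsub⟩ := mem_nhdsLT_iff_exists_Ioo_subset.1 <|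
      ((tendsto_ofReal_nhdsLT false hx.1).eventually hUp).and
        ((tendsto_ofReal_nhdsLT true hx.1).eventually hUp)
    obtain ⟨⟨b, hbB, hab, hbx⟩, -⟩ := hlim x hpB (x - a) (sub_pos.2 hax)
    exact ⟨b, hbB, hsub ⟨by linarith, hbx⟩⟩
  · obtain ⟨c, hxc, hsub⟩ := mem_nhdsGT_iff_exists_Ioo_subset.1 <|
      ((tendsto_ofReal_nhdsGT false hx.2).eventually hUp).and
        ((tendsto_ofReal_nhdsGT true hx.2).eventually hUp)
    obtain ⟨-, ⟨b, hbB, hxb, hbc⟩⟩ := hlim x hpB (c - x) (sub_pos.2 hxc)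
    exact ⟨b, hbB, hsub ⟨hxb, by linarith⟩⟩

/-- If every point of `B ⊆ (0,1)` is a two-sided limit of `B` and `d` splits the two
copies of each point of `B` at distance more than `ε`, then `B × {0,1}` has no
nonempty relatively open subset of `d`-diameter less than `ε`. -/
theorem splitInterval_no_small_open_subset
    (ε : ℝ) (hε : 0 < ε) (B : Set ℝ) (hB : B ⊆ Set.Ioo (0:ℝ) 1)
    (hlim : ∀ x ∈ B, ∀ δ : ℝ, 0 < δ →
      (∃ b ∈ B, x - δ < b ∧ b < x) ∧ (∃ b' ∈ B, x < b' ∧ b' < x + δ))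
    (d : SplitInterval → SplitInterval → ℝ)
    (hnonneg : ∀ p q, 0 ≤ d p q) (hsymm : ∀ p q, d p q = d q p)
    (hd : ∀ x : Set.Icc (0:ℝ) 1, (x : ℝ) ∈ B →
      ε < d (toLex (x, false)) (toLex (x, true))) :
    ∀ U : Set SplitInterval, IsOpen U →
      (U ∩ {p : SplitInterval | ((ofLex p).1 : ℝ) ∈ B}).Nonempty →
      ∃ p ∈ U ∩ {p : SplitInterval | ((ofLex p).1 : ℝ) ∈ B},
        ∃ q ∈ U ∩ {p : SplitInterval | ((ofLex p).1 : ℝ) ∈ B}, ε ≤ d p q :=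
  splitInterval_no_small_open_subset_general ε B hB hlim d hd
end

section
/- For a compact Hausdorff space K the following are equivalent: (1) K is almost totally disconnected; (2) there is a collection {(F_i, H_i)}_{i∈I} of pairs of closed subsets of K such that (a) F_i ∩ H_i = ∅ for all i ∈ I; (b) for every x ∈ K, the set {i ∈ I : x ∉ F_i ∪ H_i} is countable; (c) for any two distinct points x, y ∈ K there is some i ∈ I such that either x ∈ F_i and y ∈ H_i, or x ∈ H_i and y ∈ F_i. -/
universe u

open Set Topology

/-- Characterization of almost total disconnectedness for compact Hausdorff spaces via
families of pairs of disjoint closed sets. -/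
theorem almost_totally_disconnected_iff_separating_pairs
    {K : Type u} [TopologicalSpace K] [CompactSpace K] [T2Space K] :
    AlmostTotallyDisconnected K ↔
      ∃ (I : Type u) (F H : I → Set K),
        (∀ i, IsClosed (F i)) ∧ (∀ i, IsClosed (H i)) ∧
        (∀ i, F i ∩ H i = ∅) ∧
        (∀ x : K, {i : I | x ∉ F i ∪ H i}.Countable) ∧
        (∀ x y : K, x ≠ y →
          ∃ i, (x ∈ F i ∧ y ∈ H i) ∨ (x ∈ H i ∧ y ∈ F i)) := by
  constructor
  · rintro ⟨Γ, f, hemb, hIcc, hcount⟩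
    refine ⟨Γ × {r : ℚ × ℚ // (0:ℝ) ≤ (r.1:ℝ) ∧ (r.1:ℝ) < (r.2:ℝ) ∧ (r.2:ℝ) ≤ 1},
      fun i => {x | f x i.1 ≤ (i.2.1.1 : ℝ)},
      fun i => {x | (i.2.1.2 : ℝ) ≤ f x i.1}, ?_, ?_, ?_, ?_, ?_⟩
    · intro i
      exact isClosed_le ((continuous_apply i.1).comp hemb.continuous) continuous_const
    · intro i
      exact isClosed_le continuous_const ((continuous_apply i.1).comp hemb.continuous)
    · intro i
      ext x
      simp only [mem_inter_iff, mem_setOf_eq, mem_empty_iff_false, iff_false, not_and]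
      intro h1 h2
      exact absurd (h2.trans h1) (not_le.mpr i.2.2.2.1)
    · intro x
      refine Set.Countable.mono ?_ ((hcount x).prod Set.countable_univ)
      rintro ⟨γ, r⟩ hi
      simp only [mem_setOf_eq, mem_union, not_or, not_le] at hi
      refine ⟨?_, trivial⟩
      simp only [mem_setOf_eq, mem_insert_iff, mem_singleton_iff, not_or]
      constructor
      · exact ne_of_gt (lt_of_le_of_lt r.2.1 hi.1)
      · exact ne_of_lt (lt_of_lt_of_le hi.2 r.2.2.2)
    · intro x y hxy
      have hfxy : f x ≠ f y := fun h => hxy (hemb.injective h)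
      obtain ⟨γ, hγ⟩ : ∃ γ, f x γ ≠ f y γ := by
        by_contra h
        push_neg at h
        exact hfxy (funext h)
      rcases lt_or_gt_of_ne hγ with h | h
      · obtain ⟨p, hp1, hp2⟩ := exists_rat_btwn h
        obtain ⟨q, hq1, hq2⟩ := exists_rat_btwn hp2
        refine ⟨⟨γ, ⟨(p, q), le_trans (hIcc x γ).1 hp1.le, hq1, le_trans hq2.le (hIcc y γ).2⟩⟩,
          Or.inl ⟨hp1.le, hq2.le⟩⟩
      · obtain ⟨p, hp1, hp2⟩ := exists_rat_btwn h
        obtain ⟨q, hq1, hq2⟩ := exists_rat_btwn hp2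
        refine ⟨⟨γ, ⟨(p, q), le_trans (hIcc y γ).1 hp1.le, hq1, le_trans hq2.le (hIcc x γ).2⟩⟩,
          Or.inr ⟨hq2.le, hp1.le⟩⟩
  · rintro ⟨I, F, H, hFc, hHc, hdisj, hcnt, hsep⟩
    choose g hg0 hg1 hgIcc using fun i =>
      exists_continuous_zero_one_of_isClosed (hFc i) (hHc i)
        (Set.disjoint_iff_inter_eq_empty.mpr (hdisj i))
    have hcont : Continuous (fun x : K => fun i : I => g i x) :=
      continuous_pi fun i => (g i).continuous
    have hinj : Function.Injective (fun x : K => fun i : I => g i x) := by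
      intro x y hxy
      by_contra hne
      obtain ⟨i, hi | hi⟩ := hsep x y hne
      · have h0 : g i x = 0 := hg0 i hi.1
        have h1 : g i y = 1 := hg1 i hi.2
        have := congrFun hxy i
        simp only at this
        rw [h0, h1] at this
        norm_num at this
      · have h0 : g i y = 0 := hg0 i hi.2
        have h1 : g i x = 1 := hg1 i hi.1
        have := congrFun hxy i
        simp only at this
        rw [h0, h1] at this
        norm_num at this
    refine ⟨I, fun x i => g i x, (hcont.isClosedEmbedding hinj).isEmbedding,
      fun x i => hgIcc i x, ?_⟩
    intro x
    refine Set.Countable.mono ?_ (hcnt x)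
    intro i hi
    simp only [mem_setOf_eq, mem_insert_iff, mem_singleton_iff, not_or] at hi
    simp only [mem_setOf_eq, mem_union, not_or]
    exact ⟨fun h => hi.1 (hg0 i h), fun h => hi.2 (hg1 i h)⟩
end

section
/- For a linearly ordered compact space (K, ≤) the following are equivalent: (1) K is almost totally disconnected; (2) there is a collection {(a_i, b_i)}_{i∈I} ⊆ K × K such that (a) a_i < b_i for every i ∈ I; (b) for every x ∈ K, the set {i ∈ I : a_i < x < b_i} is countable; (c) for all x < y in K, there is some i ∈ I such that x ≤ a_i < b_i ≤ y. -/
universe u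

open Set Topology

section Aux

/-- In a linear order, an order-connected set lies "around" the open interval
between any glb and lub of it. -/
lemma ordConn_Ioo_subset {α : Type*} [LinearOrder α] {C : Set α} (hC : C.OrdConnected)
    {A B : α} (hA : IsGLB C A) (hB : IsLUB C B) : Ioo A B ⊆ C := by
  intro w hw
  obtain ⟨c, hcC, hcw⟩ : ∃ c ∈ C, c < w := by
    by_contra h
    push_neg at h
    exact absurd (hA.2 fun c hc => h c hc) (not_le.2 hw.1)
  obtain ⟨c', hc'C, hwc'⟩ : ∃ c' ∈ C, w < c' := by
    by_contra h
    push_neg at h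
    exact absurd (hB.2 fun c hc => h c hc) (not_le.2 hw.2)
  exact hC.out hcC hc'C ⟨hcw.le, hwc'.le⟩

/-- If a point lies strictly between a glb and a lub of two order-connected
components of the same set, the corresponding bounds agree. -/
lemma comp_bounds_unique {α : Type*} [LinearOrder α] {V : Set α} {z z' A B A' B' x : α}
    (hA : IsGLB (V.ordConnectedComponent z) A) (hB : IsLUB (V.ordConnectedComponent z) B)
    (hA' : IsGLB (V.ordConnectedComponent z') A') (hB' : IsLUB (V.ordConnectedComponent z') B')
    (h1 : A < x) (h2 : x < B) (h3 : A' < x) (h4 : x < B') : A = A' ∧ B = B' := by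
  have hx : x ∈ V.ordConnectedComponent z :=
    ordConn_Ioo_subset inferInstance hA hB ⟨h1, h2⟩
  have hx' : x ∈ V.ordConnectedComponent z' :=
    ordConn_Ioo_subset inferInstance hA' hB' ⟨h3, h4⟩
  have he : V.ordConnectedComponent z = V.ordConnectedComponent z' :=
    (Set.ordConnectedComponent_eq (Set.mem_ordConnectedComponent.1 hx)).trans
      (Set.ordConnectedComponent_eq (Set.mem_ordConnectedComponent.1 hx')).symm
  rw [he] at hA hB
  exact ⟨hA.unique hA', hB.unique hB'⟩

variable {K : Type u} [LinearOrder K] [TopologicalSpace K] [OrderTopology K] [CompactSpace K]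

lemma exists_isGLB_of_nonempty {C : Set K} (hC : C.Nonempty) : ∃ A, IsGLB C A := by
  obtain ⟨A, hA⟩ := (isClosed_closure (s := C)).isCompact.exists_isLeast hC.closure
  have h := hA.isGLB
  rw [IsGLB, lowerBounds_closure] at h
  exact ⟨A, h⟩

lemma exists_isLUB_of_nonempty {C : Set K} (hC : C.Nonempty) : ∃ B, IsLUB C B := by
  obtain ⟨B, hB⟩ := (isClosed_closure (s := C)).isCompact.exists_isGreatest hC.closure
  have h := hB.isLUB
  rw [IsLUB, upperBounds_closure] at h
  exact ⟨B, h⟩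

/-- A continuous real function crossing the band `[p,q]` on `[u,v]` does so over
some subinterval on whose interior the values stay strictly inside `(p,q)`. -/
lemma cross_lemma (g : K → ℝ) (hg : Continuous g) {u v : K} (huv : u < v) {p q : ℝ}
    (hup : g u < p) (hpq : p < q) (hqv : q < g v) :
    ∃ a' b', u ≤ a' ∧ a' < b' ∧ b' ≤ v ∧ ∀ w, a' < w → w < b' → p < g w ∧ g w < q := by
  have hScl : IsClosed (Icc u v ∩ g ⁻¹' Ici q) :=
    isClosed_Icc.inter (isClosed_Ici.preimage hg)
  have hvS : v ∈ Icc u v ∩ g ⁻¹' Ici q := ⟨⟨huv.le, le_rfl⟩, hqv.le⟩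
  obtain ⟨b', hb'⟩ := hScl.isCompact.exists_isLeast ⟨v, hvS⟩
  have hqb' : q ≤ g b' := hb'.1.2
  have hub' : u < b' := lt_of_le_of_ne hb'.1.1.1 (by
    rintro rfl
    exact absurd hqb' (not_le.2 (hup.trans hpq)))
  have hTcl : IsClosed (Icc u b' ∩ g ⁻¹' Iic p) :=
    isClosed_Icc.inter (isClosed_Iic.preimage hg)
  have huT : u ∈ Icc u b' ∩ g ⁻¹' Iic p := ⟨⟨le_rfl, hub'.le⟩, hup.le⟩
  obtain ⟨a', ha'⟩ := hTcl.isCompact.exists_isGreatest ⟨u, huT⟩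
  have hpa' : g a' ≤ p := ha'.1.2
  have ha'b' : a' < b' := lt_of_le_of_ne ha'.1.1.2 (by
    rintro rfl
    exact absurd hqb' (not_le.2 (lt_of_le_of_lt hpa' hpq)))
  refine ⟨a', b', ha'.1.1.1, ha'b', hb'.1.1.2, fun w hw1 hw2 => ?_⟩
  have hwuv : w ∈ Icc u v := ⟨ha'.1.1.1.trans hw1.le, hw2.le.trans hb'.1.1.2⟩
  constructor
  · by_contra h
    push_neg at h
    exact absurd (ha'.2 ⟨⟨hwuv.1, hw2.le⟩, h⟩) (not_le.2 hw1)
  · by_contra h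
    push_neg at h
    exact absurd (hb'.2 ⟨hwuv, h⟩) (not_le.2 hw2)

end Aux

/-- Characterization of almost total disconnectedness for linearly ordered compact
spaces via families of pairs of points. -/
theorem almost_totally_disconnected_iff_separating_intervals
    {K : Type u} [LinearOrder K] [TopologicalSpace K] [OrderTopology K] [CompactSpace K] :
    AlmostTotallyDisconnected K ↔
      ∃ (I : Type u) (a b : I → K),
        (∀ i, a i < b i) ∧
        (∀ x : K, {i : I | a i < x ∧ x < b i}.Countable) ∧
        (∀ x y : K, x < y → ∃ i, x ≤ a i ∧ a i < b i ∧ b i ≤ y) := by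
  classical
  constructor
  · rintro ⟨Γ, f, hemb, hicc, hcnt⟩
    set V : Γ × ℚ × ℚ → Set K :=
      fun t => (fun z => f z t.1) ⁻¹' Ioo (t.2.1 : ℝ) (t.2.2 : ℝ) with hVdef
    set Cond : Γ × ℚ × ℚ → K × K → Prop := fun t ab =>
      0 ≤ (t.2.1 : ℝ) ∧ (t.2.2 : ℝ) ≤ 1 ∧ ∃ z ∈ V t,
        IsGLB ((V t).ordConnectedComponent z) ab.1 ∧
        IsLUB ((V t).ordConnectedComponent z) ab.2 with hConddef
    refine ⟨{ab : K × K // ab.1 < ab.2 ∧ (Ioo ab.1 ab.2 = ∅ ∨ ∃ t, Cond t ab)},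
      fun i => i.1.1, fun i => i.1.2, fun i => i.2.1, fun x => ?_, fun x y hxy => ?_⟩
    · -- countability
      rw [← Set.countable_coe_iff]
      haveI : Countable {γ // f x γ ∉ ({0, 1} : Set ℝ)} := (hcnt x).to_subtype
      have sel : ∀ i : {i : {ab : K × K // ab.1 < ab.2 ∧
          (Ioo ab.1 ab.2 = ∅ ∨ ∃ t, Cond t ab)} | i.1.1 < x ∧ x < i.1.2},
          ∃ t : Γ × ℚ × ℚ, Cond t i.1.1 ∧ f x t.1 ∉ ({0, 1} : Set ℝ) := by
        rintro ⟨i, hi1, hi2⟩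
        obtain ⟨t, ht⟩ := i.2.2.resolve_left
          (fun hemp => Set.eq_empty_iff_forall_notMem.1 hemp x ⟨hi1, hi2⟩)
        obtain ⟨hp0, hq1, z, hzV, hA, hB⟩ := ht
        have hxC : x ∈ (V t).ordConnectedComponent z :=
          ordConn_Ioo_subset inferInstance hA hB ⟨hi1, hi2⟩
        have hxV0 : x ∈ V t := Set.ordConnectedComponent_subset hxC
        have hxV : f x t.1 ∈ Ioo (t.2.1 : ℝ) (t.2.2 : ℝ) := hxV0
        refine ⟨t, ⟨hp0, hq1, z, hzV, hA, hB⟩, ?_⟩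
        intro hmem
        rcases hmem with h | h
        · rw [h] at hxV; exact absurd hxV.1 (not_lt.2 hp0)
        · rw [Set.mem_singleton_iff] at h; rw [h] at hxV
          exact absurd hxV.2 (not_lt.2 hq1)
      choose t ht hfx using sel
      have hginj : Function.Injective
          (fun i => (⟨(t i).1, hfx i⟩, (t i).2) :
            _ → {γ // f x γ ∉ ({0, 1} : Set ℝ)} × ℚ × ℚ) := by
        intro i j hij
        have hte : t i = t j := by
          have hij2 : ((⟨(t i).1, hfx i⟩, (t i).2) :
              {γ // f x γ ∉ ({0, 1} : Set ℝ)} × ℚ × ℚ) = (⟨(t j).1, hfx j⟩, (t j).2) := hij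
          have h1 : (t i).1 = (t j).1 := congrArg (fun p => p.1.1) hij2
          have h2 := congrArg Prod.snd hij2
          exact Prod.ext h1 h2
        obtain ⟨_, _, z, hzV, hA, hB⟩ := ht i
        obtain ⟨_, _, z', hz'V, hA', hB'⟩ := ht j
        rw [hte] at hA hB
        obtain ⟨hAB1, hAB2⟩ := comp_bounds_unique hA hB hA' hB' i.2.1 i.2.2 j.2.1 j.2.2
        exact Subtype.ext (Subtype.ext (Prod.ext hAB1 hAB2))
      exact hginj.countable
    · -- separation
      by_cases hjump : ∃ c d, x ≤ c ∧ c < d ∧ d ≤ y ∧ Ioo c d = ∅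
      · obtain ⟨c, d, h1, h2, h3, h4⟩ := hjump
        exact ⟨⟨(c, d), h2, Or.inl h4⟩, h1, h2, h3⟩
      · push_neg at hjump
        have hdense : ∀ c d, x ≤ c → c < d → d ≤ y → (Ioo c d).Nonempty := hjump
        have hfne : f x ≠ f y := fun h => absurd (hemb.injective h) (ne_of_lt hxy)
        obtain ⟨γ, hγ⟩ := Function.ne_iff.1 hfne
        have cont : Continuous fun z => f z γ := (continuous_apply γ).comp hemb.continuous
        obtain ⟨p, q, hp0, hq1, hpq, a', b', hxa', ha'b', hb'y, hmid, hxV, hyV⟩ :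
            ∃ (p q : ℚ), 0 ≤ (p : ℝ) ∧ (q : ℝ) ≤ 1 ∧ (p : ℝ) < q ∧
              ∃ a' b', x ≤ a' ∧ a' < b' ∧ b' ≤ y ∧
                (∀ w, a' < w → w < b' → f w γ ∈ Ioo (p : ℝ) (q : ℝ)) ∧
                f x γ ∉ Ioo (p : ℝ) (q : ℝ) ∧ f y γ ∉ Ioo (p : ℝ) (q : ℝ) := by
          rcases hγ.lt_or_gt with h | h
          · obtain ⟨q, hq1, hq2⟩ := exists_rat_btwn h
            obtain ⟨p, hp1, hp2⟩ := exists_rat_btwn hq1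
            obtain ⟨a', b', h1, h2, h3, h4⟩ := cross_lemma (fun z => f z γ) cont hxy hp1 hp2 hq2
            refine ⟨p, q, (hicc x γ).1.trans hp1.le, hq2.le.trans (hicc y γ).2, hp2,
              a', b', h1, h2, h3, fun w hw1 hw2 => (h4 w hw1 hw2), ?_, ?_⟩
            · exact fun hmem => lt_asymm hp1 hmem.1
            · exact fun hmem => lt_asymm hq2 hmem.2
          · obtain ⟨q, hq1, hq2⟩ := exists_rat_btwn h
            obtain ⟨p, hp1, hp2⟩ := exists_rat_btwn hq1
            obtain ⟨a', b', h1, h2, h3, h4⟩ := cross_lemma (fun z => -(f z γ)) cont.neg hxy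
              (p := -(q : ℝ)) (q := -(p : ℝ)) (neg_lt_neg hq2) (neg_lt_neg hp2)
              (neg_lt_neg hp1)
            refine ⟨p, q, (hicc y γ).1.trans hp1.le, hq2.le.trans (hicc x γ).2, hp2,
              a', b', h1, h2, h3, fun w hw1 hw2 => ?_, ?_, ?_⟩
            · obtain ⟨hw3, hw4⟩ := h4 w hw1 hw2
              constructor <;> [linarith; linarith]
            · exact fun hmem => lt_asymm hq2 hmem.2
            · exact fun hmem => lt_asymm hp1 hmem.1
        obtain ⟨z₀, hz₀⟩ := hdense a' b' hxa' ha'b' hb'y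
        obtain ⟨z₁, hz₁⟩ := hdense a' z₀ hxa' hz₀.1 (hz₀.2.le.trans hb'y)
        have hz₀V : z₀ ∈ V (γ, p, q) := hmid z₀ hz₀.1 hz₀.2
        have hz₁C : z₁ ∈ (V (γ, p, q)).ordConnectedComponent z₀ := by
          rw [Set.mem_ordConnectedComponent, Set.uIcc_of_ge hz₁.2.le]
          exact fun w hw => hmid w (hz₁.1.trans_le hw.1) (hw.2.trans_lt hz₀.2)
        have hz₀C : z₀ ∈ (V (γ, p, q)).ordConnectedComponent z₀ :=
          Set.self_mem_ordConnectedComponent.2 hz₀V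
        obtain ⟨A, hA⟩ := exists_isGLB_of_nonempty ⟨z₀, hz₀C⟩
        obtain ⟨B, hB⟩ := exists_isLUB_of_nonempty ⟨z₀, hz₀C⟩
        have hCV : (V (γ, p, q)).ordConnectedComponent z₀ ⊆ V (γ, p, q) :=
          Set.ordConnectedComponent_subset
        have hxlb : x ∈ lowerBounds ((V (γ, p, q)).ordConnectedComponent z₀) := by
          intro c hc
          by_contra hcx
          push_neg at hcx
          have hxmem : x ∈ Icc c z₀ := ⟨hcx.le, hxa'.trans hz₀.1.le⟩
          exact hxV (hCV ((Set.OrdConnected.out inferInstance) hc hz₀C hxmem))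
        have hyub : y ∈ upperBounds ((V (γ, p, q)).ordConnectedComponent z₀) := by
          intro c hc
          by_contra hyc
          push_neg at hyc
          have hymem : y ∈ Icc z₀ c := ⟨(hz₀.2.le.trans hb'y), hyc.le⟩
          exact hyV (hCV ((Set.OrdConnected.out inferInstance) hz₀C hc hymem))
        have hAB : A < B := lt_of_le_of_lt (hA.1 hz₁C) (lt_of_lt_of_le hz₁.2 (hB.1 hz₀C))
        exact ⟨⟨(A, B), hAB, Or.inr ⟨(γ, p, q), hp0, hq1, z₀, hz₀V, hA, hB⟩⟩,
          hA.2 hxlb, hAB, hB.2 hyub⟩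
  · rintro ⟨I, a, b, hab, hcnt, hsep⟩
    have hury : ∀ i : I, ∃ g : C(K, ℝ), EqOn g 0 (Iic (a i)) ∧ EqOn g 1 (Ici (b i)) ∧
        ∀ x, g x ∈ Icc (0 : ℝ) 1 := by
      intro i
      refine exists_continuous_zero_one_of_isClosed isClosed_Iic isClosed_Ici ?_
      exact Set.disjoint_left.2 fun x hx hx' => absurd (hab i) (not_lt.2 (le_trans hx' hx))
    choose g hg0 hg1 hg01 using hury
    have hinj : Function.Injective (fun x : K => fun i : I => g i x) := by
      intro x y hxy
      by_contra hne
      rcases lt_or_gt_of_ne hne with h | h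
      · obtain ⟨i, h1, h2, h3⟩ := hsep x y h
        have hc : g i x = g i y := congrFun hxy i
        have e0 : g i x = 0 := hg0 i h1
        have e1 : g i y = 1 := hg1 i h3
        rw [e0, e1] at hc
        exact zero_ne_one hc
      · obtain ⟨i, h1, h2, h3⟩ := hsep y x h
        have hc : g i x = g i y := congrFun hxy i
        have e0 : g i y = 0 := hg0 i h1
        have e1 : g i x = 1 := hg1 i h3
        rw [e0, e1] at hc
        exact one_ne_zero hc
    have hcont : Continuous (fun x : K => fun i : I => g i x) :=
      continuous_pi fun i => (g i).continuous
    refine ⟨I, fun x i => g i x, (hcont.isClosedEmbedding hinj).isEmbedding,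
      fun x i => hg01 i x, fun x => (hcnt x).mono ?_⟩
    intro i hi
    rw [Set.mem_setOf_eq] at hi
    by_contra hmem
    rw [Set.mem_setOf_eq, not_and_or, not_lt, not_lt] at hmem
    apply hi
    show g i x ∈ ({0, 1} : Set ℝ)
    rcases hmem with h | h
    · have e0 : g i x = 0 := hg0 i h
      rw [e0]
      exact Set.mem_insert _ _
    · have e1 : g i x = 1 := hg1 i h
      rw [e1]
      exact Set.mem_insert_iff.2 (Or.inr rfl)
end

section
/- Let K be a linearly ordered compact space and let d be a quasi metric on K that fragments K. Then there exists a collection {(a_i, b_i)}_{i∈I} ⊆ K × K such that (a) a_i < b_i for every i ∈ I; (b) for every x ∈ K, the set {i ∈ I : a_i < x < b_i} is countable; (c) for all x < y in K, there is some i ∈ I such that x ≤ a_i < b_i ≤ y. -/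
universe u

open Set Topology

/-- The collection of "ε-nets": closed sets containing `bot` and `top` all of whose
gaps have `d`-diameter at most `ε`. -/
def QMNet {K : Type u} [LinearOrder K] [TopologicalSpace K]
    (d : K → K → ℝ) (bot top : K) (ε : ℝ) : Set (Set K) :=
  {C | IsClosed C ∧ bot ∈ C ∧ top ∈ C ∧
    ∀ s t : K, s < t → Icc s t ∩ C = ∅ → d s t ≤ ε}

section Aux

variable {K : Type u} [LinearOrder K] [TopologicalSpace K] [OrderTopology K] [CompactSpace K]

lemma exists_minimal_net (d : K → K → ℝ) (bot top : K) (ε : ℝ) :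
    ∃ C, Minimal (· ∈ QMNet d bot top ε) C := by
  apply zorn_superset
  intro c hcS hchain
  rcases c.eq_empty_or_nonempty with rfl | hcne
  · refine ⟨univ, ⟨isClosed_univ, mem_univ _, mem_univ _, ?_⟩, by simp⟩
    intro s t hst hemp
    rw [inter_univ] at hemp
    exact absurd hemp (nonempty_Icc.mpr hst.le).ne_empty
  · have hne : Nonempty c := hcne.to_subtype
    refine ⟨⋂₀ c, ⟨isClosed_sInter fun C hCc => (hcS hCc).1,
      mem_sInter.mpr fun C hCc => (hcS hCc).2.1,
      mem_sInter.mpr fun C hCc => (hcS hCc).2.2.1, ?_⟩,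
      fun s hs => sInter_subset_of_mem hs⟩
    intro s t hst hemp
    by_contra hdst
    have hnonempty : ∀ C : c, (Icc s t ∩ (C : Set K)).Nonempty := by
      intro C
      rcases (Icc s t ∩ (C : Set K)).eq_empty_or_nonempty with h | h
      · exact absurd ((hcS C.2).2.2.2 s t hst h) hdst
      · exact h
    have hdir : Directed (· ⊇ ·) (fun C : c => Icc s t ∩ (C : Set K)) := by
      intro C1 C2
      rcases hchain.total C1.2 C2.2 with h | h
      · exact ⟨C1, Subset.rfl, inter_subset_inter Subset.rfl h⟩
      · exact ⟨C2, inter_subset_inter Subset.rfl h, Subset.rfl⟩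
    obtain ⟨z, hz⟩ := IsCompact.nonempty_iInter_of_directed_nonempty_isCompact_isClosed
      _ hdir hnonempty
      (fun C => (isClosed_Icc.inter (hcS C.2).1).isCompact)
      (fun C => isClosed_Icc.inter (hcS C.2).1)
    have h1 := mem_iInter.mp hz
    have : z ∈ Icc s t ∩ ⋂₀ c :=
      ⟨(h1 hne.some).1, mem_sInter.mpr fun C hCc => (h1 ⟨C, hCc⟩).2⟩
    rw [hemp] at this
    exact this

/-- A minimal ε-net contains no nondegenerate jump-free closed interval. -/
lemma no_dense_interval_in_minimal_net (d : K → K → ℝ) (hfrag : Fragments d)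
    {bot top : K} (hbot : ∀ z, bot ≤ z) (htop : ∀ z, z ≤ top)
    {ε : ℝ} (hε : 0 < ε) {C : Set K} (hC : Minimal (· ∈ QMNet d bot top ε) C)
    {u v : K} (huv : u < v)
    (hjf : ∀ p q : K, u ≤ p → p < q → q ≤ v → (Ioo p q).Nonempty) :
    ¬ Icc u v ⊆ C := by
  intro hsub
  obtain ⟨U, hUopen, ⟨p0, hp0U, hp0I⟩, hsmall⟩ :=
    hfrag (Icc u v) ⟨u, left_mem_Icc.mpr huv.le⟩ isClosed_Icc ε hε
  obtain ⟨a, b, hab, hua, hbv, hIccU⟩ :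
      ∃ a b : K, a < b ∧ u ≤ a ∧ b ≤ v ∧ Icc a b ⊆ U := by
    rcases lt_or_eq_of_le hp0I.2 with hp0v | hp0v
    · obtain ⟨w, hw, hIco⟩ := exists_Ico_subset_of_mem_nhds (hUopen.mem_nhds hp0U) ⟨v, hp0v⟩
      obtain ⟨z, hz⟩ := hjf p0 (min w v) hp0I.1 (lt_min hw hp0v) (min_le_right _ _)
      exact ⟨p0, z, hz.1, hp0I.1, (hz.2.trans_le (min_le_right _ _)).le,
        fun t ht => hIco ⟨ht.1, ht.2.trans_lt (hz.2.trans_le (min_le_left _ _))⟩⟩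
    · have hup0 : u < p0 := hp0v ▸ huv
      obtain ⟨w, hw, hIoc⟩ := exists_Ioc_subset_of_mem_nhds (hUopen.mem_nhds hp0U) ⟨u, hup0⟩
      obtain ⟨z, hz⟩ := hjf (max w u) p0 (le_max_right _ _) (max_lt hw hup0) hp0I.2
      exact ⟨z, p0, hz.2, (le_max_right w u).trans hz.1.le, hp0I.2,
        fun t ht => hIoc ⟨((le_max_left w u).trans_lt hz.1).trans_le ht.1, ht.2⟩⟩
  have hIccuv : Icc a b ⊆ Icc u v := Icc_subset_Icc hua hbv
  have hC'mem : C \ Ioo a b ∈ QMNet d bot top ε := by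
    refine ⟨hC.1.1.sdiff isOpen_Ioo,
      ⟨hC.1.2.1, fun h => absurd h.1 (not_lt.mpr (hbot a))⟩,
      ⟨hC.1.2.2.1, fun h => absurd h.2 (not_lt.mpr (htop b))⟩, ?_⟩
    intro s t hst hemp
    rcases (Icc s t ∩ C).eq_empty_or_nonempty with h | ⟨c0, hc0⟩
    · exact hC.1.2.2.2 s t hst h
    · have hc0ab : c0 ∈ Ioo a b := by
        by_contra h
        exact eq_empty_iff_forall_notMem.mp hemp c0 ⟨hc0.1, hc0.2, h⟩
      have has : a < s := by
        by_contra h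
        push_neg at h
        exact eq_empty_iff_forall_notMem.mp hemp a
          ⟨⟨h, (hc0ab.1.trans_le hc0.1.2).le⟩, hsub ⟨hua, hab.le.trans hbv⟩,
            fun hh => lt_irrefl a hh.1⟩
      have htb : t < b := by
        by_contra h
        push_neg at h
        exact eq_empty_iff_forall_notMem.mp hemp b
          ⟨⟨hc0.1.1.trans hc0ab.2.le, h⟩, hsub ⟨hua.trans hab.le, hbv⟩,
            fun hh => lt_irrefl b hh.2⟩
      have hsm : s ∈ Icc a b := ⟨has.le, hst.le.trans htb.le⟩
      have htm : t ∈ Icc a b := ⟨has.le.trans hst.le, htb.le⟩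
      exact (hsmall s ⟨hIccU hsm, hIccuv hsm⟩ t ⟨hIccU htm, hIccuv htm⟩).le
  obtain ⟨z, hz⟩ := hjf a b hua hab hbv
  have hzC : z ∈ C := hsub ⟨hua.trans hz.1.le, hz.2.le.trans hbv⟩
  exact (hC.2 hC'mem diff_subset hzC).2 hz

end Aux

/-- In a linearly ordered compact space with a fragmenting quasi metric there is a
family of pairs of points as in the order characterization of almost total
disconnectedness. -/
theorem separating_intervals_of_fragmenting_quasi_metric
    {K : Type u} [LinearOrder K] [TopologicalSpace K] [OrderTopology K] [CompactSpace K]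
    (d : K → K → ℝ) (hd : IsQuasiMetric d) (hfrag : Fragments d) :
    ∃ (I : Type u) (a b : I → K),
      (∀ i, a i < b i) ∧
      (∀ x : K, {i : I | a i < x ∧ x < b i}.Countable) ∧
      (∀ x y : K, x < y → ∃ i, x ≤ a i ∧ a i < b i ∧ b i ≤ y) := by
  rcases isEmpty_or_nonempty K with hK | hK
  · exact ⟨ULift.{u} Empty, fun i => i.down.elim, fun i => i.down.elim,
      fun i => i.down.elim, fun x => Set.to_countable _, fun x y _ => (hK.elim x)⟩
  · obtain ⟨bot, hbotl⟩ := isCompact_univ.exists_isLeast (univ_nonempty : (univ : Set K).Nonempty)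
    obtain ⟨top, htopg⟩ := isCompact_univ.exists_isGreatest (univ_nonempty : (univ : Set K).Nonempty)
    have hbot : ∀ z : K, bot ≤ z := fun z => hbotl.2 (mem_univ z)
    have htop : ∀ z : K, z ≤ top := fun z => htopg.2 (mem_univ z)
    have hdpos : ∀ s t : K, s ≠ t → 0 < d s t := fun s t h =>
      (hd.1 s t).lt_of_ne (fun h0 => h ((hd.2.2 s t).mp h0.symm))
    have hmin : ∀ n : ℕ, ∃ C, Minimal (· ∈ QMNet d bot top (1 / ((n : ℝ) + 1))) C :=
      fun n => exists_minimal_net d bot top _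
    choose C hC using hmin
    refine ⟨{p : K × K // p.1 < p.2 ∧ (Ioo p.1 p.2 = ∅ ∨
        ∃ n : ℕ, p.1 ∈ C n ∧ p.2 ∈ C n ∧ Ioo p.1 p.2 ∩ C n = ∅)},
      fun i => i.1.1, fun i => i.1.2, fun i => i.2.1, ?_, ?_⟩
    · -- point countability
      intro x
      have hsub : {i : {p : K × K // p.1 < p.2 ∧ (Ioo p.1 p.2 = ∅ ∨
            ∃ n : ℕ, p.1 ∈ C n ∧ p.2 ∈ C n ∧ Ioo p.1 p.2 ∩ C n = ∅)} |
            i.1.1 < x ∧ x < i.1.2} ⊆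
          ⋃ n : ℕ, {i | (i.1.1 < x ∧ x < i.1.2) ∧
            i.1.1 ∈ C n ∧ i.1.2 ∈ C n ∧ Ioo i.1.1 i.1.2 ∩ C n = ∅} := by
        rintro i ⟨h1, h2⟩
        rcases i.2.2 with h | ⟨n, hn⟩
        · exact absurd (mem_Ioo.mpr ⟨h1, h2⟩) (by rw [h]; exact notMem_empty x)
        · exact mem_iUnion.mpr ⟨n, ⟨⟨h1, h2⟩, hn⟩⟩
      refine Set.Countable.mono hsub (countable_iUnion fun n => Set.Subsingleton.countable ?_)
      rintro i ⟨⟨hi1, hi2⟩, hiC1, hiC2, higap⟩ j ⟨⟨hj1, hj2⟩, hjC1, hjC2, hjgap⟩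
      have h1 : i.1.1 = j.1.1 := by
        rcases lt_trichotomy i.1.1 j.1.1 with h | h | h
        · exfalso
          have hmem : j.1.1 ∈ Ioo i.1.1 i.1.2 ∩ C n := ⟨⟨h, hj1.trans hi2⟩, hjC1⟩
          rw [higap] at hmem
          exact hmem
        · exact h
        · exfalso
          have hmem : i.1.1 ∈ Ioo j.1.1 j.1.2 ∩ C n := ⟨⟨h, hi1.trans hj2⟩, hiC1⟩
          rw [hjgap] at hmem
          exact hmem
      have h2 : i.1.2 = j.1.2 := by
        rcases lt_trichotomy i.1.2 j.1.2 with h | h | h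
        · exfalso
          have hmem : i.1.2 ∈ Ioo j.1.1 j.1.2 ∩ C n := ⟨⟨hj1.trans hi2, h⟩, hiC2⟩
          rw [hjgap] at hmem
          exact hmem
        · exact h
        · exfalso
          have hmem : j.1.2 ∈ Ioo i.1.1 i.1.2 ∩ C n := ⟨⟨hi1.trans hj2, h⟩, hjC2⟩
          rw [higap] at hmem
          exact hmem
      exact Subtype.ext (Prod.ext h1 h2)
    · -- density
      intro x y hxy
      by_cases hjump : ∃ p q : K, x ≤ p ∧ p < q ∧ q ≤ y ∧ Ioo p q = ∅
      · obtain ⟨p, q, h1, h2, h3, h4⟩ := hjump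
        exact ⟨⟨(p, q), h2, Or.inl h4⟩, h1, h2, h3⟩
      · push_neg at hjump
        have hjf : ∀ p q : K, x ≤ p → p < q → q ≤ y → (Ioo p q).Nonempty := hjump
        obtain ⟨z1, hz1⟩ := hjf x y le_rfl hxy le_rfl
        obtain ⟨z2, hz2⟩ := hjf z1 y hz1.1.le hz1.2 le_rfl
        obtain ⟨z3, hz3⟩ := hjf z2 y (hz1.1.trans hz2.1).le hz2.2 le_rfl
        obtain ⟨z4, hz4⟩ := hjf z3 y ((hz1.1.trans hz2.1).trans hz3.1).le hz3.2 le_rfl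
        obtain ⟨z5, hz5⟩ := hjf z4 y (((hz1.1.trans hz2.1).trans hz3.1).trans hz4.1).le
          hz4.2 le_rfl
        obtain ⟨z6, hz6⟩ := hjf z5 y
          ((((hz1.1.trans hz2.1).trans hz3.1).trans hz4.1).trans hz5.1).le hz5.2 le_rfl
        set δ := min (d z1 z2) (d z5 z6) with hδdef
        have hδ : 0 < δ := lt_min (hdpos _ _ hz2.1.ne) (hdpos _ _ hz6.1.ne)
        obtain ⟨n, hn⟩ := exists_nat_one_div_lt hδ
        have hCn := hC n
        by_cases hss : Icc z3 z4 ⊆ C n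
        · refine absurd hss (no_dense_interval_in_minimal_net d hfrag hbot htop
            (by positivity) hCn hz4.1 ?_)
          intro p q h1 h2 h3
          exact hjf p q ((hz1.1.trans (hz2.1.trans hz3.1)).le.trans h1) h2
            (h3.trans (hz4.2.le))
        · obtain ⟨w, hw, hwC⟩ := not_subset.mp hss
          obtain ⟨p, hpmem, hpub⟩ :=
            (((hCn.1.1.inter isClosed_Iic)).isCompact).exists_isGreatest
              ⟨bot, hCn.1.2.1, hbot w⟩
          obtain ⟨q, hqmem, hqlb⟩ :=
            (((hCn.1.1.inter isClosed_Ici)).isCompact).exists_isLeast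
              ⟨top, hCn.1.2.2.1, htop w⟩
          have hpw : p < w := lt_of_le_of_ne hpmem.2 (fun h => hwC (h ▸ hpmem.1))
          have hwq : w < q := lt_of_le_of_ne hqmem.2 (fun h => hwC (h ▸ hqmem.1))
          have hgap : Ioo p q ∩ C n = ∅ := by
            apply eq_empty_iff_forall_notMem.mpr
            rintro c ⟨⟨hpc, hcq⟩, hcC⟩
            rcases le_total c w with h | h
            · exact absurd (hpub ⟨hcC, h⟩) (not_le.mpr hpc)
            · exact absurd (hqlb ⟨hcC, h⟩) (not_le.mpr hcq)
          by_cases hin : x ≤ p ∧ q ≤ y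
          · exact ⟨⟨(p, q), hpw.trans hwq, Or.inr ⟨n, hpmem.1, hqmem.1, hgap⟩⟩,
              hin.1, hpw.trans hwq, hin.2⟩
          · rcases not_and_or.mp hin with h | h
            · have hpx : p < x := not_le.mp h
              have hemp : Icc z1 z2 ∩ C n = ∅ := by
                apply eq_empty_iff_forall_notMem.mpr
                rintro c ⟨⟨h1, h2⟩, hcC⟩
                exact eq_empty_iff_forall_notMem.mp hgap c
                  ⟨⟨(hpx.trans hz1.1).trans_le h1,
                    h2.trans_lt ((hz3.1.trans_le hw.1).trans hwq)⟩, hcC⟩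
              have hle := hCn.1.2.2.2 z1 z2 hz2.1 hemp
              have hge : δ ≤ d z1 z2 := min_le_left _ _
              linarith
            · have hyq : y < q := not_le.mp h
              have hemp : Icc z5 z6 ∩ C n = ∅ := by
                apply eq_empty_iff_forall_notMem.mpr
                rintro c ⟨⟨h1, h2⟩, hcC⟩
                exact eq_empty_iff_forall_notMem.mp hgap c
                  ⟨⟨((hpw.trans_le hw.2).trans hz5.1).trans_le h1,
                    (h2.trans_lt hz6.2).trans hyq⟩, hcC⟩
              have hle := hCn.1.2.2.2 z5 z6 hz6.1 hemp
              have hge : δ ≤ d z5 z6 := min_le_right _ _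
              linarith
end

section
/- Let X be a nonempty linear order that is compact in its order topology, and let (T_n)_{n≥1} be an increasing sequence of subsets of X whose union T = ⋃_{n≥1} T_n satisfies: for all x < y in X, the half-open interval (x, y] meets T. Define d : X × X → [0,∞) by d(x,x) = 0 and, for x < y, d(x,y) = d(y,x) = 1/min{n ≥ 1 : (x,y] ∩ T_n ≠ ∅}. Then d is a Reznichenko metric: for every pair of distinct points x, y ∈ X there exist open neighborhoods U of x and V of y and δ > 0 such that d(u,v) ≥ δ for all u ∈ U and v ∈ V. -/
universe u

open Set Topology

/-- The distance `d(x,y) = 1/min{n ≥ 1 : (x,y] ∩ T n ≠ ∅}` (for `x < y`) built from an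
increasing sequence of subsets with dense union is a Reznichenko metric: distinct
points have open neighborhoods at positive distance. -/
theorem sequence_distance_Reznichenko
    {X : Type u} [LinearOrder X] [TopologicalSpace X] [OrderTopology X]
    [CompactSpace X] [Nonempty X]
    (T : ℕ → Set X) (hmono : ∀ n, 1 ≤ n → T n ⊆ T (n + 1))
    (hdense : ∀ x y : X, x < y → ∃ n, 1 ≤ n ∧ (Set.Ioc x y ∩ T n).Nonempty)
    (d : X → X → ℝ)
    (hrefl : ∀ x, d x x = 0)
    (hsymm : ∀ x y, d x y = d y x)
    (hdef : ∀ x y : X, x < y →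
      d x y = 1 / ((sInf {n : ℕ | 1 ≤ n ∧ (Set.Ioc x y ∩ T n).Nonempty} : ℕ) : ℝ)) :
    ∀ x y : X, x ≠ y → ∃ U V : Set X, IsOpen U ∧ IsOpen V ∧ x ∈ U ∧ y ∈ V ∧
      ∃ δ : ℝ, 0 < δ ∧ ∀ u ∈ U, ∀ v ∈ V, δ ≤ d u v := by
  have key : ∀ N : ℕ, 1 ≤ N → ∀ t ∈ T N, ∀ u v : X, u < t → t ≤ v →
      (1 : ℝ) / N ≤ d u v := by
    intro N hN t ht u v hut htv
    have huv : u < v := lt_of_lt_of_le hut htv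
    rw [hdef u v huv]
    have hNS : N ∈ {n : ℕ | 1 ≤ n ∧ (Set.Ioc u v ∩ T n).Nonempty} :=
      ⟨hN, ⟨t, ⟨hut, htv⟩, ht⟩⟩
    have h1 : 1 ≤ sInf {n : ℕ | 1 ≤ n ∧ (Set.Ioc u v ∩ T n).Nonempty} :=
      (Nat.sInf_mem ⟨N, hNS⟩).1
    have h2 : sInf {n : ℕ | 1 ≤ n ∧ (Set.Ioc u v ∩ T n).Nonempty} ≤ N :=
      Nat.sInf_le hNS
    apply one_div_le_one_div_of_le
    · exact_mod_cast h1
    · exact_mod_cast h2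
  have main : ∀ x y : X, x < y → ∃ U V : Set X, IsOpen U ∧ IsOpen V ∧
      x ∈ U ∧ y ∈ V ∧ ∃ δ : ℝ, 0 < δ ∧ ∀ u ∈ U, ∀ v ∈ V, δ ≤ d u v := by
    intro x y hlt
    obtain ⟨n, hn, t, ⟨hxt, hty⟩, htn⟩ := hdense x y hlt
    by_cases hcase : ∃ s : X, x < s ∧ s < y
    · obtain ⟨s, hxs, hsy⟩ := hcase
      obtain ⟨m, hm, t', ⟨hxt', ht's⟩, ht'm⟩ := hdense x s hxs
      have hmpos : (0 : ℝ) < 1 / m := by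
        apply div_pos one_pos; exact_mod_cast hm
      exact ⟨Set.Iio t', Set.Ioi t', isOpen_Iio, isOpen_Ioi, hxt',
        lt_of_le_of_lt ht's hsy, 1 / m, hmpos,
        fun u hu v hv => key m hm t' ht'm u v hu (le_of_lt hv)⟩
    · push_neg at hcase
      have hnpos : (0 : ℝ) < 1 / n := by
        apply div_pos one_pos; exact_mod_cast hn
      refine ⟨Set.Iio y, Set.Ioi x, isOpen_Iio, isOpen_Ioi, hlt, hlt, 1 / n, hnpos, ?_⟩
      intro u hu v hv
      have hty' : t = y := le_antisymm hty (hcase t hxt)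
      have hu' : u ≤ x := by
        by_contra h
        push_neg at h
        exact absurd hu (not_lt_of_ge (hcase u h))
      have hv' : y ≤ v := hcase v hv
      exact key n hn t htn u v (lt_of_le_of_lt hu' (hty' ▸ hlt)) (hty' ▸ hv')
  intro x y hxy
  rcases hxy.lt_or_gt with h | h
  · exact main x y h
  · obtain ⟨U, V, hU, hV, hyU, hxV, δ, hδ, hd⟩ := main y x h
    exact ⟨V, U, hV, hU, hxV, hyU, δ, hδ,
      fun u hu v hv => (hsymm u v) ▸ hd v hv u hu⟩
end

section
/- Let X be a nonempty linear order that is compact in its order topology, and let (T_n)_{n≥1} be an increasing sequence of subsets of X such that each T_n is well-ordered (the restriction of < to T_n is well-founded), the greatest element of X belongs to T_1, and the union T = ⋃_{n≥1} T_n satisfies: for all x < y in X, the half-open interval (x, y] meets T. Define d : X × X → [0,∞) by d(x,x) = 0 and, for x < y, d(x,y) = d(y,x) = 1/min{n ≥ 1 : (x,y] ∩ T_n ≠ ∅}. Then d fragments X: for every nonempty closed subset L of X and every ε > 0 there exists an open set U of X with U ∩ L nonempty and sup{d(x,y) : x, y ∈ U ∩ L} < ε. -/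
universe u

open Set Topology

/-- The distance `d(x,y) = 1/min{n ≥ 1 : (x,y] ∩ T n ≠ ∅}` (for `x < y`) built from an
increasing sequence of well-ordered subsets with dense union, the top of `X` lying in
`T 1`, fragments `X`. -/
theorem sequence_distance_fragments
    {X : Type u} [LinearOrder X] [TopologicalSpace X] [OrderTopology X]
    [CompactSpace X] [Nonempty X]
    (T : ℕ → Set X) (hmono : ∀ n, 1 ≤ n → T n ⊆ T (n + 1))
    (hwf : ∀ n, 1 ≤ n → (T n).IsWF)
    (m : X) (hm : ∀ x : X, x ≤ m) (hmT : m ∈ T 1)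
    (hdense : ∀ x y : X, x < y → ∃ n, 1 ≤ n ∧ (Set.Ioc x y ∩ T n).Nonempty)
    (d : X → X → ℝ)
    (hrefl : ∀ x, d x x = 0)
    (hsymm : ∀ x y, d x y = d y x)
    (hdef : ∀ x y : X, x < y →
      d x y = 1 / ((sInf {n : ℕ | 1 ≤ n ∧ (Set.Ioc x y ∩ T n).Nonempty} : ℕ) : ℝ)) :
    Fragments d := by
  intro L hLne hLcl ε hε
  obtain ⟨N0, hN0⟩ := exists_nat_one_div_lt hε
  set N := max N0 1 with hNdef
  have hN1 : 1 ≤ N := le_max_right _ _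
  have hNε : 1 / ((N : ℝ) + 1) < ε := by
    refine lt_of_le_of_lt ?_ hN0
    apply one_div_le_one_div_of_le
    · positivity
    · have : (N0 : ℝ) ≤ (N : ℝ) := by exact_mod_cast le_max_left N0 1
      linarith
  -- monotonicity of T
  have hmon : ∀ k n, 1 ≤ k → k ≤ n → T k ⊆ T n := by
    intro k n hk hkn
    induction n with
    | zero => omega
    | succ n ih =>
      rcases eq_or_lt_of_le hkn with h | h
      · rw [h]
      · exact (ih (by omega)).trans (hmono n (by omega))
  -- key computation
  have key : ∀ x y : X, x < y → Set.Ioc x y ∩ T N = ∅ → d x y < ε := by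
    intro x y hxy hempty
    have hs : {n : ℕ | 1 ≤ n ∧ (Set.Ioc x y ∩ T n).Nonempty}.Nonempty := by
      obtain ⟨n, hn1, hn2⟩ := hdense x y hxy
      exact ⟨n, hn1, hn2⟩
    have hk := Nat.sInf_mem hs
    set k := sInf {n : ℕ | 1 ≤ n ∧ (Set.Ioc x y ∩ T n).Nonempty} with hkdef
    have hkN : N < k := by
      by_contra h
      push_neg at h
      have hne : (Set.Ioc x y ∩ T N).Nonempty :=
        hk.2.mono (Set.inter_subset_inter_right _ (hmon k N hk.1 h))
      rw [hempty] at hne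
      exact Set.not_nonempty_empty hne
    rw [hdef x y hxy]
    calc 1 / (k : ℝ) ≤ 1 / ((N : ℝ) + 1) := by
          apply one_div_le_one_div_of_le
          · positivity
          · exact_mod_cast hkN
      _ < ε := hNε
  obtain ⟨a, ha⟩ := (hLcl.isCompact).exists_isLeast hLne
  by_cases ham : a = m
  · refine ⟨Set.univ, isOpen_univ, ⟨a, Set.mem_univ _, ha.1⟩, ?_⟩
    intro x hx y hy
    have hx' : x = a := le_antisymm (ham ▸ hm x) (ha.2 hx.2)
    have hy' : y = a := le_antisymm (ham ▸ hm y) (ha.2 hy.2)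
    rw [hx', hy', hrefl]
    exact hε
  · have ham' : a < m := lt_of_le_of_ne (hm a) ham
    have hSwf : (T N ∩ Set.Ioi a).IsWF := (hwf N hN1).mono Set.inter_subset_left
    have hSne : (T N ∩ Set.Ioi a).Nonempty := ⟨m, hmon 1 N le_rfl hN1 hmT, ham'⟩
    set b := hSwf.min hSne with hbdef
    have hbS := hSwf.min_mem hSne
    have hab : a < b := hbS.2
    have key2 : ∀ x y, x ∈ Set.Iio b ∩ L → y ∈ Set.Iio b ∩ L → x < y → d x y < ε := by
      intro x y hx hy hxy
      apply key x y hxy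
      ext t
      simp only [Set.mem_inter_iff, Set.mem_Ioc, Set.mem_empty_iff_false, iff_false, not_and]
      rintro ⟨htx, hty⟩ htT
      have htS : t ∈ T N ∩ Set.Ioi a := ⟨htT, lt_of_le_of_lt (ha.2 hx.2) htx⟩
      have hbt : b ≤ t := hSwf.min_le hSne htS
      exact absurd (lt_of_le_of_lt hty hy.1) (not_lt.2 hbt)
    refine ⟨Set.Iio b, isOpen_Iio, ⟨a, hab, ha.1⟩, ?_⟩
    intro x hx y hy
    rcases lt_trichotomy x y with h | h | h
    · exact key2 x y hx hy h
    · rw [h, hrefl]; exact hε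
    · rw [hsymm]; exact key2 y x hy hx h
end

section
/- Let X be a nonempty linear order that is compact in its order topology, and let (T_n)_{n≥1} be an increasing sequence of subsets of X such that each T_n is well-ordered (the restriction of < to T_n is well-founded), the greatest element of X belongs to T_1, and the union T = ⋃_{n≥1} T_n satisfies: for all x < y in X, the half-open interval (x, y] meets T. Then there exists a map d : X × X → [0,∞) which is symmetric, satisfies d(x,y) = 0 if and only if x = y, satisfies the triangle inequality, is a Reznichenko metric (any two distinct points have open neighborhoods at positive d-distance from each other), and fragments X. -/
universe u

open Set Topology

open Classical in
/-- Index of the first `T n` (with `n ≥ 1`) meeting `Ioc x y`. -/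
noncomputable def auxN {X : Type u} [LinearOrder X] (T : ℕ → Set X) (x y : X) : ℕ :=
  if h : ∃ n, 1 ≤ n ∧ (Set.Ioc x y ∩ T n).Nonempty then Nat.find h else 0

/-- The candidate metric. -/
noncomputable def auxD {X : Type u} [LinearOrder X] (T : ℕ → Set X) (x y : X) : ℝ :=
  if x = y then 0 else (2:ℝ)⁻¹ ^ auxN T (min x y) (max x y)

lemma auxN_spec {X : Type u} [LinearOrder X] {T : ℕ → Set X} {x y : X}
    (hex : ∃ n, 1 ≤ n ∧ (Set.Ioc x y ∩ T n).Nonempty) :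
    1 ≤ auxN T x y ∧ (Set.Ioc x y ∩ T (auxN T x y)).Nonempty := by
  classical
  unfold auxN
  rw [dif_pos hex]
  exact Nat.find_spec hex

lemma auxN_le {X : Type u} [LinearOrder X] {T : ℕ → Set X} {x y : X}
    (hex : ∃ n, 1 ≤ n ∧ (Set.Ioc x y ∩ T n).Nonempty) {k : ℕ}
    (hk : 1 ≤ k) (hne : (Set.Ioc x y ∩ T k).Nonempty) : auxN T x y ≤ k := by
  classical
  unfold auxN
  rw [dif_pos hex]
  exact Nat.find_min' hex ⟨hk, hne⟩

lemma auxD_of_lt {X : Type u} [LinearOrder X] {T : ℕ → Set X} {x y : X} (h : x < y) :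
    auxD T x y = (2:ℝ)⁻¹ ^ auxN T x y := by
  unfold auxD
  rw [if_neg h.ne, min_eq_left h.le, max_eq_right h.le]

lemma auxD_symm {X : Type u} [LinearOrder X] (T : ℕ → Set X) (x y : X) :
    auxD T x y = auxD T y x := by
  unfold auxD
  rcases eq_or_ne x y with rfl | h
  · simp
  · rw [if_neg h, if_neg h.symm, min_comm, max_comm]

lemma pow_half_le {a b : ℕ} (h : a ≤ b) : (2:ℝ)⁻¹ ^ b ≤ (2:ℝ)⁻¹ ^ a :=
  pow_le_pow_of_le_one (by norm_num) (by norm_num) h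

/-- Given an increasing sequence of well-ordered subsets of a compact linear order,
with dense union and the top element in `T 1`, there is a fragmenting Reznichenko
metric on the space. -/
theorem exists_fragmenting_Reznichenko_metric
    {X : Type u} [LinearOrder X] [TopologicalSpace X] [OrderTopology X]
    [CompactSpace X] [Nonempty X]
    (T : ℕ → Set X) (hmono : ∀ n, 1 ≤ n → T n ⊆ T (n + 1))
    (hwf : ∀ n, 1 ≤ n → (T n).IsWF)
    (m : X) (hm : ∀ x : X, x ≤ m) (hmT : m ∈ T 1)
    (hdense : ∀ x y : X, x < y → ∃ n, 1 ≤ n ∧ (Set.Ioc x y ∩ T n).Nonempty) :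
    ∃ d : X → X → ℝ,
      (∀ x y, 0 ≤ d x y) ∧
      (∀ x y, d x y = d y x) ∧
      (∀ x y, d x y = 0 ↔ x = y) ∧
      (∀ x y z : X, d x z ≤ d x y + d y z) ∧
      (∀ x y : X, x ≠ y → ∃ U V : Set X, IsOpen U ∧ IsOpen V ∧ x ∈ U ∧ y ∈ V ∧
        ∃ δ : ℝ, 0 < δ ∧ ∀ u ∈ U, ∀ v ∈ V, δ ≤ d u v) ∧
      Fragments d := by
  classical
  set d : X → X → ℝ := auxD T with hd
  -- monotonicity of the chain
  have hmono' : ∀ k, 1 ≤ k → ∀ n, k ≤ n → T k ⊆ T n := by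
    intro k hk n hkn
    induction n, hkn using Nat.le_induction with
    | base => exact subset_rfl
    | succ n hn ih => exact ih.trans (hmono n (hk.trans hn))
  have hpos : ∀ n : ℕ, (0:ℝ) < (2:ℝ)⁻¹ ^ n := fun n => pow_pos (by norm_num) n
  have hnn : ∀ x y, 0 ≤ d x y := by
    intro x y
    rw [hd]; unfold auxD
    split
    · exact le_rfl
    · exact (hpos _).le
  have hsymm : ∀ x y, d x y = d y x := fun x y => auxD_symm T x y
  have hdself : ∀ x : X, d x x = 0 := by
    intro x; rw [hd]; unfold auxD; rw [if_pos rfl]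
  have hdlt : ∀ x y : X, x < y → d x y = (2:ℝ)⁻¹ ^ auxN T x y :=
    fun x y h => auxD_of_lt h
  have hiff : ∀ x y, d x y = 0 ↔ x = y := by
    intro x y
    constructor
    · intro h0
      by_contra hne
      rcases lt_or_gt_of_ne hne with h | h
      · rw [hdlt x y h] at h0; exact (hpos _).ne' h0
      · rw [hsymm, hdlt y x h] at h0; exact (hpos _).ne' h0
    · rintro rfl; exact hdself x
  -- subset monotonicity of auxN
  have hNsub : ∀ x y x' y' : X, x < y → x' < y' → Set.Ioc x' y' ⊆ Set.Ioc x y →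
      auxN T x y ≤ auxN T x' y' := by
    intro x y x' y' h h' hsub
    obtain ⟨h1, t, ht, htT⟩ := auxN_spec (hdense x' y' h')
    exact auxN_le (hdense x y h) h1 ⟨t, hsub ht, htT⟩
  -- ultrametric inequality
  have hult : ∀ x y z : X, d x z ≤ max (d x y) (d y z) := by
    have main : ∀ x y z : X, x < z → d x z ≤ max (d x y) (d y z) := by
      intro x y z hxz
      rcases lt_trichotomy y x with hyx | rfl | hxy
      · -- y < x < z
        refine le_max_of_le_right ?_
        rw [hdlt x z hxz, hdlt y z (hyx.trans hxz)]
        exact pow_half_le (hNsub y z x z (hyx.trans hxz) hxz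
          (Set.Ioc_subset_Ioc_left hyx.le))
      · exact le_max_of_le_right le_rfl
      · rcases lt_trichotomy y z with hyz | rfl | hzy
        · -- x < y < z
          obtain ⟨h1, t, ht, htT⟩ := auxN_spec (hdense x z hxz)
          rcases le_or_gt t y with hty | hyt
          · refine le_max_of_le_left ?_
            rw [hdlt x z hxz, hdlt x y hxy]
            exact pow_half_le (auxN_le (hdense x y hxy) h1 ⟨t, ⟨ht.1, hty⟩, htT⟩)
          · refine le_max_of_le_right ?_
            rw [hdlt x z hxz, hdlt y z hyz]
            exact pow_half_le (auxN_le (hdense y z hyz) h1 ⟨t, ⟨hyt, ht.2⟩, htT⟩)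
        · exact le_max_of_le_left le_rfl
        · -- x < z < y
          refine le_max_of_le_left ?_
          rw [hdlt x z hxz, hdlt x y (hxz.trans hzy)]
          exact pow_half_le (hNsub x y x z (hxz.trans hzy) hxz
            (Set.Ioc_subset_Ioc_right hzy.le))
    intro x y z
    rcases lt_trichotomy x z with h | rfl | h
    · exact main x y z h
    · rw [hdself]
      exact le_max_of_le_left (hnn x y)
    · calc d x z = d z x := hsymm x z
        _ ≤ max (d z y) (d y x) := main z y x h
        _ = max (d x y) (d y z) := by rw [hsymm z y, hsymm y x, max_comm]
  have htri : ∀ x y z : X, d x z ≤ d x y + d y z := by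
    intro x y z
    refine (hult x y z).trans (max_le ?_ ?_)
    · exact le_add_of_nonneg_right (hnn y z)
    · exact le_add_of_nonneg_left (hnn x y)
  -- Reznichenko property
  have hRez : ∀ x y : X, x < y → ∃ U V : Set X, IsOpen U ∧ IsOpen V ∧ x ∈ U ∧ y ∈ V ∧
      ∃ δ : ℝ, 0 < δ ∧ ∀ u ∈ U, ∀ v ∈ V, δ ≤ d u v := by
    intro x y hxy
    by_cases hoo : (Set.Ioo x y).Nonempty
    · obtain ⟨x', hx'1, hx'2⟩ := hoo
      obtain ⟨n, hn1, t, ht, htT⟩ := hdense x x' hx'1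
      refine ⟨Set.Iio t, Set.Ioi x', isOpen_Iio, isOpen_Ioi, ht.1, hx'2, (2:ℝ)⁻¹ ^ n,
        hpos n, ?_⟩
      intro u hu v hv
      have huv : u < v := lt_of_lt_of_le hu (ht.2.trans (le_of_lt hv))
      have htuv : t ∈ Set.Ioc u v := ⟨hu, ht.2.trans (le_of_lt hv)⟩
      rw [hdlt u v huv]
      exact pow_half_le (auxN_le (hdense u v huv) hn1 ⟨t, htuv, htT⟩)
    · obtain ⟨n, hn1, t, ht, htT⟩ := hdense x y hxy
      have hty : t = y := by
        rcases lt_or_eq_of_le ht.2 with h | h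
        · exact absurd ⟨ht.1, h⟩ (fun hc => hoo ⟨t, hc⟩)
        · exact h
      subst hty
      refine ⟨Set.Iio t, Set.Ioi x, isOpen_Iio, isOpen_Ioi, hxy, hxy, (2:ℝ)⁻¹ ^ n,
        hpos n, ?_⟩
      intro u hu v hv
      have hvt : t ≤ v := le_of_not_gt fun h => hoo ⟨v, hv, h⟩
      have huv : u < v := lt_of_lt_of_le hu hvt
      rw [hdlt u v huv]
      exact pow_half_le (auxN_le (hdense u v huv) hn1 ⟨t, ⟨hu, hvt⟩, htT⟩)
  refine ⟨d, hnn, hsymm, hiff, htri, ?_, ?_⟩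
  · intro x y hne
    rcases lt_or_gt_of_ne hne with h | h
    · exact hRez x y h
    · obtain ⟨U, V, hU, hV, hyU, hxV, δ, hδ, hle⟩ := hRez y x h
      exact ⟨V, U, hV, hU, hxV, hyU, δ, hδ, fun u hu v hv => by
        rw [hsymm]; exact hle v hv u hu⟩
  -- Fragmentation
  · intro L hLne hLcl ε hε
    obtain ⟨n0, hn0⟩ := exists_pow_lt_of_lt_one hε (by norm_num : (2:ℝ)⁻¹ < 1)
    set n := max n0 1 with hn
    have hn1 : 1 ≤ n := le_max_right _ _
    have hnε : (2:ℝ)⁻¹ ^ n < ε := lt_of_le_of_lt (pow_half_le (le_max_left _ _)) hn0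
    -- generic wrap-up: if intervals inside U ∩ L avoid T n, the diameter is small
    have wrap : ∀ U : Set X,
        (∀ x ∈ U ∩ L, ∀ y ∈ U ∩ L, x < y → Set.Ioc x y ∩ T n = ∅) →
        ∀ x ∈ U ∩ L, ∀ y ∈ U ∩ L, d x y < ε := by
      intro U hfree x hx y hy
      have key : ∀ a b : X, a < b → Set.Ioc a b ∩ T n = ∅ → d a b < ε := by
        intro a b hab hempty
        obtain ⟨h1, t, ht, htT⟩ := auxN_spec (hdense a b hab)
        have hnN : n ≤ auxN T a b := by
          by_contra hc
          push_neg at hc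
          have : t ∈ Set.Ioc a b ∩ T n := ⟨ht, hmono' _ h1 n hc.le htT⟩
          rw [hempty] at this
          exact this
        rw [hdlt a b hab]
        exact lt_of_le_of_lt (pow_half_le hnN) hnε
      rcases lt_trichotomy x y with h | rfl | h
      · exact key x y h (hfree x hx y hy h)
      · rw [hdself]; exact hε
      · rw [hsymm]; exact key y x h (hfree y hy x hx h)
    -- the first element of T n dominating some element of L
    set S : Set X := {t | t ∈ T n ∧ ∃ l ∈ L, l ≤ t} with hS
    have hSwf : S.IsWF := (hwf n hn1).mono (fun t ht => ht.1)
    obtain ⟨l0, hl0⟩ := hLne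
    have hSne : S.Nonempty := ⟨m, hmono' 1 le_rfl n hn1 hmT, l0, hl0, hm l0⟩
    set t₀ := hSwf.min hSne with ht₀
    have ht₀S : t₀ ∈ S := hSwf.min_mem hSne
    have ht₀min : ∀ t ∈ S, t₀ ≤ t := fun t ht =>
      le_of_not_gt (hSwf.not_lt_min hSne ht)
    by_cases hA : (Set.Iio t₀ ∩ L).Nonempty
    · -- some point of L lies strictly below t₀
      refine ⟨Set.Iio t₀, isOpen_Iio, hA, wrap _ ?_⟩
      intro x hx y hy hxy
      rw [Set.eq_empty_iff_forall_notMem]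
      rintro t ⟨⟨hxt, hty⟩, htT⟩
      have : t ∈ S := ⟨htT, x, hx.2, hxt.le⟩
      exact absurd (lt_of_le_of_lt hty hy.1) (not_lt_of_ge (ht₀min t this))
    · -- L lies entirely in [t₀, ∞) and t₀ ∈ L
      have hLsub : ∀ l ∈ L, t₀ ≤ l := fun l hl =>
        le_of_not_gt fun h => hA ⟨l, h, hl⟩
      have ht₀L : t₀ ∈ L := by
        obtain ⟨_, l, hl, hle⟩ := ht₀S
        have := le_antisymm hle (hLsub l hl)
        rwa [← this]
      by_cases hS' : (T n ∩ Set.Ioi t₀).Nonempty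
      · have hS'wf : (T n ∩ Set.Ioi t₀).IsWF := (hwf n hn1).mono inter_subset_left
        set s := hS'wf.min hS' with hs
        have hsS' : s ∈ T n ∩ Set.Ioi t₀ := hS'wf.min_mem hS'
        have hsmin : ∀ t ∈ T n ∩ Set.Ioi t₀, s ≤ t := fun t ht =>
          le_of_not_gt (hS'wf.not_lt_min hS' ht)
        refine ⟨Set.Iio s, isOpen_Iio, ⟨t₀, hsS'.2, ht₀L⟩, wrap _ ?_⟩
        intro x hx y hy hxy
        rw [Set.eq_empty_iff_forall_notMem]
        rintro t ⟨⟨hxt, hty⟩, htT⟩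
        have htS' : t ∈ T n ∩ Set.Ioi t₀ :=
          ⟨htT, lt_of_le_of_lt (hLsub x hx.2) hxt⟩
        exact absurd (lt_of_le_of_lt hty hy.1) (not_lt_of_ge (hsmin t htS'))
      · refine ⟨Set.univ, isOpen_univ, ⟨t₀, Set.mem_univ _, ht₀L⟩, wrap _ ?_⟩
        intro x hx y hy hxy
        rw [Set.eq_empty_iff_forall_notMem]
        rintro t ⟨⟨hxt, _⟩, htT⟩
        exact hS' ⟨t, htT, lt_of_le_of_lt (hLsub x hx.2) hxt⟩
end
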